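/- arXiv:1501.06596 — 6 statements merged into one kernel-verified Lean document; each statement's English description precedes it below -/
import Mathlib

section
/- Let d : [0,1] → [0,∞) be an integrable function with ∫_0^1 d = 1, and let f : [0,1] → ℝ be nonnegative, increasing, continuously differentiable and log-concave (f′/f antitone on the set where f > 0), with f positive on (0,1]. Assume ∫_0^y d(x)·f(y−x) dx > 0 for every y ∈ (0,1], and for y ∈ (0,1], t ∈ [0,1] define F_y(t) = (∫_0^{min(t,y)} d(x)·f(y−x) dx)/(∫_0^y d(x)·f(y−x) dx). Then: (i) for each fixed t ∈ [0,1], the map y ↦ F_y(t) is antitone (decreasing) on (0,1]; and (ii) for all y ∈ (0,1] and t ∈ [0,1], F_y(t) ≥ ∫_0^t d(x) dx. -/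
/-!
Log-concavity of `f` makes the kernel `(x, y) ↦ f (y - x)` totally positive of order two: for
`y₁ ≤ y₂` the ratio `f (y₂ - x) / f (y₁ - x)` increases in `x`. So with `p = f (y₁ - t)` and
`q = f (y₂ - t)`, the density `p * d x * f (y₂ - x)` lies below `q * d x * f (y₁ - x)` left of `t`
and above it right of `t`, and such a single crossing orders the cumulative masses at `t`, which
is (i). For (ii) compare `d x * f (y - x)` with `d x` in the same way: their ratio `f (y - x)`
decreases in `x` because `f` is increasing.
-/

open MeasureTheory Set intervalIntegral

theorem ConcaveOn.add_le_add_of_shift {s : Set ℝ} {g : ℝ → ℝ} (hg : ConcaveOn ℝ s g)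
    {u v δ : ℝ} (hu : u ∈ s) (hvδ : v + δ ∈ s) (huv : u ≤ v) (hδ : 0 ≤ δ) :
    g (v + δ) + g u ≤ g (u + δ) + g v := by
  -- `u + δ` and `v` are the two mirror-image convex combinations of `u` and `v + δ`.
  set θ := δ / (v + δ - u)
  have hθ : θ * (v + δ - u) = δ := div_mul_cancel_of_imp fun h => by linarith
  have hθ₁ : θ ≤ 1 := div_le_one_of_le₀ (by linarith) (by linarith)
  have hθ₀ : 0 ≤ θ := div_nonneg hδ (by linarith)
  have h₁ := hg.2 hu hvδ (sub_nonneg.2 hθ₁) hθ₀ (by ring)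
  have h₂ := hg.2 hu hvδ hθ₀ (sub_nonneg.2 hθ₁) (by ring)
  simp only [smul_eq_mul] at h₁ h₂
  rw [show (1 - θ) * u + θ * (v + δ) = u + δ by linear_combination hθ] at h₁
  rw [show θ * u + (1 - θ) * (v + δ) = v by linear_combination -hθ] at h₂
  linarith

theorem concaveOn_log_of_antitoneOn_derivWithin_div {f : ℝ → ℝ} {a b u : ℝ}
    (hf : DifferentiableOn ℝ f (Icc a b))
    (hlc : AntitoneOn (fun t => derivWithin f (Icc a b) t / f t) (Icc a b ∩ {t | 0 < f t}))
    (hau : a ≤ u) (hpos : ∀ x ∈ Icc u b, 0 < f x) :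
    ConcaveOn ℝ (Icc u b) (fun x => Real.log (f x)) := by
  have hsub : Icc u b ⊆ Icc a b := Icc_subset_Icc_left hau
  have hdiff : ∀ x ∈ Ioo u b, DifferentiableAt ℝ f x := fun x hx =>
    hf.differentiableAt (Icc_mem_nhds (hau.trans_lt hx.1) hx.2)
  have hderiv : ∀ x ∈ Ioo u b,
      deriv (fun x => Real.log (f x)) x = derivWithin f (Icc a b) x / f x := fun x hx => by
    rw [(hdiff x hx).hasDerivAt.log (hpos x (Ioo_subset_Icc_self hx)).ne' |>.deriv,
      derivWithin_of_mem_nhds (Icc_mem_nhds (hau.trans_lt hx.1) hx.2)]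
  refine AntitoneOn.concaveOn_of_deriv (convex_Icc u b)
    ((hf.continuousOn.mono hsub).log fun x hx => (hpos x hx).ne') ?_ ?_ <;> rw [interior_Icc]
  · exact fun x hx =>
      ((hdiff x hx).log (hpos x (Ioo_subset_Icc_self hx)).ne').differentiableWithinAt
  · intro x hx y hy hxy
    rw [hderiv x hx, hderiv y hy]
    exact hlc ⟨hsub (Ioo_subset_Icc_self hx), hpos x (Ioo_subset_Icc_self hx)⟩
      ⟨hsub (Ioo_subset_Icc_self hy), hpos y (Ioo_subset_Icc_self hy)⟩ hxy

theorem mul_le_mul_shift_of_logConcave {f : ℝ → ℝ} {a b : ℝ}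
    (hf_nonneg : ∀ t ∈ Icc a b, 0 ≤ f t) (hf_mono : MonotoneOn f (Icc a b))
    (hf : DifferentiableOn ℝ f (Icc a b))
    (hlc : AntitoneOn (fun t => derivWithin f (Icc a b) t / f t) (Icc a b ∩ {t | 0 < f t}))
    {u v δ : ℝ} (hau : a ≤ u) (huv : u ≤ v) (hδ : 0 ≤ δ) (hvb : v + δ ≤ b) :
    f (v + δ) * f u ≤ f (u + δ) * f v := by
  have huI : u ∈ Icc a b := ⟨hau, by linarith⟩
  rcases (hf_nonneg u huI).eq_or_lt with hfu | hfu
  · rw [← hfu, mul_zero]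
    exact mul_nonneg (hf_nonneg _ ⟨by linarith, by linarith⟩)
      (hf_nonneg _ ⟨by linarith, by linarith⟩)
  have hpos : ∀ x ∈ Icc u b, 0 < f x := fun x hx =>
    hfu.trans_le (hf_mono huI ⟨hau.trans hx.1, hx.2⟩ hx.1)
  have hu : u ∈ Icc u b := ⟨le_rfl, by linarith⟩
  have hv : v ∈ Icc u b := ⟨huv, by linarith⟩
  have huδ : u + δ ∈ Icc u b := ⟨by linarith, by linarith⟩
  have hvδ : v + δ ∈ Icc u b := ⟨by linarith, hvb⟩
  have hlog := (concaveOn_log_of_antitoneOn_derivWithin_div hf hlc hau hpos).add_le_add_of_shift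
    hu hvδ huv hδ
  rwa [← Real.log_mul (hpos _ hvδ).ne' hfu.ne', ← Real.log_mul (hpos _ huδ).ne' (hpos _ hv).ne',
    Real.log_le_log_iff (mul_pos (hpos _ hvδ) hfu) (mul_pos (hpos _ huδ) (hpos _ hv))] at hlog

theorem mul_le_mul_comp_sub_of_logConcave {f : ℝ → ℝ} {a b : ℝ}
    (hf_nonneg : ∀ t ∈ Icc a b, 0 ≤ f t) (hf_mono : MonotoneOn f (Icc a b))
    (hf : DifferentiableOn ℝ f (Icc a b))
    (hlc : AntitoneOn (fun t => derivWithin f (Icc a b) t / f t) (Icc a b ∩ {t | 0 < f t}))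
    {x z y₁ y₂ : ℝ} (hxz : x ≤ z) (hy : y₁ ≤ y₂) (hz : a ≤ y₁ - z) (hx : y₂ - x ≤ b) :
    f (y₂ - x) * f (y₁ - z) ≤ f (y₂ - z) * f (y₁ - x) := by
  have := mul_le_mul_shift_of_logConcave hf_nonneg hf_mono hf hlc hz (sub_le_sub_left hxz y₁)
    (sub_nonneg.2 hy) (by linarith)
  convert this using 3 <;> ring

theorem integral_le_integral_of_nonneg {g : ℝ → ℝ} {a s c : ℝ} (has : a ≤ s) (hsc : s ≤ c)
    (hg : IntervalIntegrable g volume a c) (hg_nonneg : ∀ x ∈ Icc a c, 0 ≤ g x) :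
    ∫ x in a..s, g x ≤ ∫ x in a..c, g x :=
  integral_mono_interval le_rfl has hsc
    (ae_restrict_of_forall_mem measurableSet_Ioc fun x hx => hg_nonneg x (Ioc_subset_Icc_self hx))
    hg

theorem integral_mul_integral_le_of_single_crossing {g₁ g₂ : ℝ → ℝ} {a t b p q : ℝ}
    (hat : a ≤ t) (htb : t ≤ b)
    (hg₁ : IntervalIntegrable g₁ volume a b) (hg₂ : IntervalIntegrable g₂ volume a b)
    (hg₁_nonneg : ∀ x ∈ Icc a b, 0 ≤ g₁ x) (hp : 0 < p)
    (hleft : ∀ x ∈ Icc a t, g₂ x * p ≤ g₁ x * q)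
    (hright : ∀ x ∈ Icc t b, g₁ x * q ≤ g₂ x * p) :
    (∫ x in a..t, g₂ x) * (∫ x in a..b, g₁ x) ≤ (∫ x in a..t, g₁ x) * ∫ x in a..b, g₂ x := by
  have ht : t ∈ uIcc a b := Icc_subset_uIcc ⟨hat, htb⟩
  have hleft_int {g : ℝ → ℝ} (hg : IntervalIntegrable g volume a b) :
      IntervalIntegrable g volume a t := hg.mono_set (uIcc_subset_uIcc_left ht)
  have hright_int {g : ℝ → ℝ} (hg : IntervalIntegrable g volume a b) :
      IntervalIntegrable g volume t b := hg.mono_set (uIcc_subset_uIcc_right ht)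
  rw [← integral_add_adjacent_intervals (hleft_int hg₁) (hright_int hg₁),
    ← integral_add_adjacent_intervals (hleft_int hg₂) (hright_int hg₂)]
  set N₁ := ∫ x in a..t, g₁ x
  set N₂ := ∫ x in a..t, g₂ x
  set M₁ := ∫ x in t..b, g₁ x
  set M₂ := ∫ x in t..b, g₂ x
  have hN : N₂ * p ≤ N₁ * q := by
    simpa only [intervalIntegral.integral_mul_const] using
      integral_mono_on hat ((hleft_int hg₂).mul_const p) ((hleft_int hg₁).mul_const q) hleft
  have hM : M₁ * q ≤ M₂ * p := by
    simpa only [intervalIntegral.integral_mul_const] using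
      integral_mono_on htb ((hright_int hg₁).mul_const q) ((hright_int hg₂).mul_const p) hright
  have hN₁ : 0 ≤ N₁ := integral_nonneg hat fun x hx => hg₁_nonneg x ⟨hx.1, hx.2.trans htb⟩
  have hM₁ : 0 ≤ M₁ := integral_nonneg htb fun x hx => hg₁_nonneg x ⟨hat.trans hx.1, hx.2⟩
  have hcross : p * (N₂ * M₁) ≤ p * (N₁ * M₂) := calc
    p * (N₂ * M₁) = N₂ * p * M₁ := by ring
    _ ≤ N₁ * q * M₁ := mul_le_mul_of_nonneg_right hN hM₁
    _ = N₁ * (M₁ * q) := by ring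
    _ ≤ N₁ * (M₂ * p) := mul_le_mul_of_nonneg_left hM hN₁
    _ = p * (N₁ * M₂) := by ring
  nlinarith [le_of_mul_le_mul_left hcross hp]

theorem intervalIntegrable_mul_comp_sub {d f : ℝ → ℝ} {y a b : ℝ}
    (hd : IntervalIntegrable d volume 0 1) (hf : ContinuousOn f (Icc 0 1))
    (hy : y ≤ 1) (ha : a ∈ Icc 0 y) (hb : b ∈ Icc 0 y) :
    IntervalIntegrable (fun x => d x * f (y - x)) volume a b := by
  have hab : uIcc a b ⊆ Icc 0 y := uIcc_subset_Icc ha hb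
  refine (hd.mono_set ?_).mul_continuousOn (hf.comp (by fun_prop) fun x hx => ?_)
  · rw [uIcc_of_le zero_le_one]
    exact hab.trans (Icc_subset_Icc_right hy)
  · exact ⟨by linarith [(hab hx).2], by linarith [(hab hx).1]⟩

theorem mul_comp_sub_nonneg {d f : ℝ → ℝ} (hd : ∀ x ∈ Icc (0:ℝ) 1, 0 ≤ d x)
    (hf : ∀ t ∈ Icc (0:ℝ) 1, 0 ≤ f t) {y : ℝ} (hy : y ≤ 1) :
    ∀ x ∈ Icc 0 y, 0 ≤ d x * f (y - x) := fun x hx =>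
  mul_nonneg (hd x ⟨hx.1, hx.2.trans hy⟩) (hf _ ⟨by linarith [hx.2], by linarith [hx.1]⟩)

/-- The conditional distribution function `F_y(t)`. -/
noncomputable def sawtoothCDF (d f : ℝ → ℝ) (y t : ℝ) : ℝ :=
  (∫ x in (0:ℝ)..(min t y), d x * f (y - x)) / ∫ x in (0:ℝ)..y, d x * f (y - x)

theorem sawtoothCDF_antitoneOn {d f : ℝ → ℝ}
    (hd_int : IntervalIntegrable d volume 0 1) (hd_nonneg : ∀ x ∈ Icc (0:ℝ) 1, 0 ≤ d x)
    (hf_nonneg : ∀ t ∈ Icc (0:ℝ) 1, 0 ≤ f t) (hf_mono : MonotoneOn f (Icc (0:ℝ) 1))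
    (hf : DifferentiableOn ℝ f (Icc 0 1))
    (hlc : AntitoneOn (fun t => derivWithin f (Icc (0:ℝ) 1) t / f t)
      (Icc (0:ℝ) 1 ∩ {t | 0 < f t}))
    (hf_pos : ∀ t ∈ Ioc (0:ℝ) 1, 0 < f t)
    (hden_pos : ∀ y ∈ Ioc (0:ℝ) 1, 0 < ∫ x in (0:ℝ)..y, d x * f (y - x))
    {t : ℝ} (ht : 0 ≤ t) :
    AntitoneOn (fun y => sawtoothCDF d f y t) (Ioc 0 1) := by
  intro y₁ hy₁ y₂ hy₂ hy
  have hg_int {y a b : ℝ} (hy : y ≤ 1) (ha : a ∈ Icc 0 y) (hb : b ∈ Icc 0 y) :=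
    intervalIntegrable_mul_comp_sub (f := f) hd_int hf.continuousOn hy ha hb
  have hg_nonneg {y : ℝ} (hy : y ≤ 1) := mul_comp_sub_nonneg hd_nonneg hf_nonneg hy
  have hg₂_int := hg_int hy₂.2 ⟨le_rfl, hy₂.1.le⟩ ⟨hy₂.1.le, le_rfl⟩
  rcases le_or_gt y₁ t with hty₁ | hty₁
  · simp only [sawtoothCDF, min_eq_right hty₁, div_self (hden_pos y₁ hy₁).ne']
    exact div_le_one_of_le₀ (integral_le_integral_of_nonneg (le_min ht hy₂.1.le)
      (min_le_right _ _) hg₂_int (hg_nonneg hy₂.2)) (hden_pos y₂ hy₂).le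
  simp only [sawtoothCDF, min_eq_left hty₁.le, min_eq_left (hty₁.le.trans hy)]
  rw [div_le_div_iff₀ (hden_pos y₂ hy₂) (hden_pos y₁ hy₁)]
  have htp2 {x z : ℝ} (hx : 0 ≤ x) (hxz : x ≤ z) (hz : z ≤ y₁) :=
    mul_le_mul_comp_sub_of_logConcave hf_nonneg hf_mono hf hlc hxz hy (sub_nonneg.2 hz)
      (by linarith [hy₂.2])
  have hdx {x : ℝ} (hx : x ∈ Icc 0 y₁) : 0 ≤ d x := hd_nonneg x ⟨hx.1, hx.2.trans hy₁.2⟩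
  have hcross := integral_mul_integral_le_of_single_crossing (p := f (y₁ - t)) (q := f (y₂ - t))
    ht hty₁.le (hg_int hy₁.2 ⟨le_rfl, hy₁.1.le⟩ ⟨hy₁.1.le, le_rfl⟩)
    (hg_int hy₂.2 ⟨le_rfl, hy₂.1.le⟩ ⟨hy₁.1.le, hy⟩) (hg_nonneg hy₁.2)
    (hf_pos _ ⟨sub_pos.2 hty₁, by linarith [hy₁.2]⟩)
    (fun x hx => by
      linear_combination mul_le_mul_of_nonneg_left (htp2 hx.1 hx.2 hty₁.le)
        (hdx ⟨hx.1, hx.2.trans hty₁.le⟩))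
    (fun x hx => by
      linear_combination mul_le_mul_of_nonneg_left (htp2 ht hx.1 hx.2)
        (hdx ⟨ht.trans hx.1, hx.2⟩))
  refine hcross.trans (mul_le_mul_of_nonneg_left ?_ ?_)
  · exact integral_le_integral_of_nonneg hy₁.1.le hy hg₂_int (hg_nonneg hy₂.2)
  · exact integral_nonneg ht fun x hx => hg_nonneg hy₁.2 x ⟨hx.1, hx.2.trans hty₁.le⟩

theorem integral_le_sawtoothCDF {d f : ℝ → ℝ}
    (hd_int : IntervalIntegrable d volume 0 1) (hd_nonneg : ∀ x ∈ Icc (0:ℝ) 1, 0 ≤ d x)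
    (hd_one : (∫ x in (0:ℝ)..1, d x) = 1)
    (hf_nonneg : ∀ t ∈ Icc (0:ℝ) 1, 0 ≤ f t) (hf_mono : MonotoneOn f (Icc (0:ℝ) 1))
    (hf_cont : ContinuousOn f (Icc 0 1)) (hf_pos : ∀ t ∈ Ioc (0:ℝ) 1, 0 < f t)
    (hden_pos : ∀ y ∈ Ioc (0:ℝ) 1, 0 < ∫ x in (0:ℝ)..y, d x * f (y - x))
    {y t : ℝ} (hy : y ∈ Ioc 0 1) (ht : t ∈ Icc 0 1) :
    ∫ x in (0:ℝ)..t, d x ≤ sawtoothCDF d f y t := by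
  have hd_le_one {s : ℝ} (hs : s ∈ Icc (0:ℝ) 1) : ∫ x in (0:ℝ)..s, d x ≤ 1 :=
    hd_one ▸ integral_le_integral_of_nonneg hs.1 hs.2 hd_int hd_nonneg
  rcases le_or_gt y t with hyt | hty
  · simpa only [sawtoothCDF, min_eq_right hyt, div_self (hden_pos y hy).ne'] using hd_le_one ht
  simp only [sawtoothCDF, min_eq_left hty.le]
  rw [le_div_iff₀ (hden_pos y hy)]
  have hf_le {x z : ℝ} (hx : x ∈ Icc 0 y) (hz : z ∈ Icc 0 y) (hxz : x ≤ z) :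
      f (y - z) ≤ f (y - x) :=
    hf_mono ⟨by linarith [hz.2], by linarith [hz.1, hy.2]⟩
      ⟨by linarith [hx.2], by linarith [hx.1, hy.2]⟩ (by linarith)
  have hdx {x : ℝ} (hx : x ∈ Icc 0 y) : 0 ≤ d x := hd_nonneg x ⟨hx.1, hx.2.trans hy.2⟩
  have htI : t ∈ Icc 0 y := ⟨ht.1, hty.le⟩
  have hcross := integral_mul_integral_le_of_single_crossing (g₂ := d) (p := f (y - t)) (q := 1)
    ht.1 hty.le
    (intervalIntegrable_mul_comp_sub hd_int hf_cont hy.2 ⟨le_rfl, hy.1.le⟩ ⟨hy.1.le, le_rfl⟩)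
    (hd_int.mono_set (uIcc_subset_uIcc_left (Icc_subset_uIcc ⟨hy.1.le, hy.2⟩)))
    (mul_comp_sub_nonneg hd_nonneg hf_nonneg hy.2)
    (hf_pos _ ⟨sub_pos.2 hty, by linarith [hy.2, ht.1]⟩)
    (fun x hx => by
      rw [mul_one]
      exact mul_le_mul_of_nonneg_left (hf_le ⟨hx.1, hx.2.trans hty.le⟩ htI hx.2)
        (hdx ⟨hx.1, hx.2.trans hty.le⟩))
    (fun x hx => by
      rw [mul_one]
      exact mul_le_mul_of_nonneg_left (hf_le htI ⟨ht.1.trans hx.1, hx.2⟩ hx.1)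
        (hdx ⟨ht.1.trans hx.1, hx.2⟩))
  calc _ ≤ (∫ x in (0:ℝ)..t, d x * f (y - x)) * ∫ x in (0:ℝ)..y, d x := hcross
    _ ≤ (∫ x in (0:ℝ)..t, d x * f (y - x)) * 1 :=
      mul_le_mul_of_nonneg_left (hd_le_one ⟨hy.1.le, hy.2⟩)
        (integral_nonneg ht.1 fun x hx => mul_comp_sub_nonneg hd_nonneg hf_nonneg hy.2 x
          ⟨hx.1, hx.2.trans hty.le⟩)
    _ = _ := mul_one _

/-- Monotonicity of the conditional cdf `F_y` of a lower particle given
its right upper neighbour at `y`, and the bound `F_y(t) ≥ ∫_0^t d`, for a log-concave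
increasing interaction density `f` and a probability density `d`. -/
theorem stmt8 (d f : ℝ → ℝ)
    (hd_int : IntervalIntegrable d volume 0 1)
    (hd_nonneg : ∀ x ∈ Icc (0:ℝ) 1, 0 ≤ d x)
    (hd_one : (∫ x in (0:ℝ)..1, d x) = 1)
    (hf_nonneg : ∀ t ∈ Icc (0:ℝ) 1, 0 ≤ f t)
    (hf_mono : MonotoneOn f (Icc (0:ℝ) 1))
    (hf_C1 : ContDiffOn ℝ 1 f (Icc (0:ℝ) 1))
    (hf_logconcave : AntitoneOn (fun t => derivWithin f (Icc (0:ℝ) 1) t / f t)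
      (Icc (0:ℝ) 1 ∩ {t | 0 < f t}))
    (hf_pos : ∀ t ∈ Ioc (0:ℝ) 1, 0 < f t)
    (hden_pos : ∀ y ∈ Ioc (0:ℝ) 1, 0 < ∫ x in (0:ℝ)..y, d x * f (y - x)) :
    (∀ t ∈ Icc (0:ℝ) 1,
      AntitoneOn (fun y =>
        (∫ x in (0:ℝ)..(min t y), d x * f (y - x)) / (∫ x in (0:ℝ)..y, d x * f (y - x)))
        (Ioc (0:ℝ) 1)) ∧
    (∀ y ∈ Ioc (0:ℝ) 1, ∀ t ∈ Icc (0:ℝ) 1,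
      (∫ x in (0:ℝ)..t, d x) ≤
        (∫ x in (0:ℝ)..(min t y), d x * f (y - x)) / (∫ x in (0:ℝ)..y, d x * f (y - x))) := by
  have hf := hf_C1.differentiableOn one_ne_zero
  exact ⟨fun t ht => sawtoothCDF_antitoneOn hd_int hd_nonneg hf_nonneg hf_mono hf hf_logconcave
      hf_pos hden_pos ht.1,
    fun y hy t ht => integral_le_sawtoothCDF hd_int hd_nonneg hd_one hf_nonneg hf_mono
      hf.continuousOn hf_pos hden_pos hy ht⟩
end

section
/- Let A ≥ 1, let f : [0,1] → ℝ be increasing, continuously differentiable, with 0 ≤ f ≤ A and ∫_0^1 f = 1, and let g : [0,1] → ℝ be increasing, nonnegative and continuously differentiable. Fix x₂ ∈ [0,1) and define D(x) = ∫_{max(x,x₂)}^1 f(y−x)·g(y−x₂) dy for x ∈ [0,1], and assume ∫_0^1 D(x′) dx′ > 0. Then the normalized function d(x) = D(x)/∫_0^1 D(x′) dx′ satisfies d(x) ≤ 4A² for all x ∈ [0,1]. -/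
open MeasureTheory Set intervalIntegral

/-!
Write `D = unnormalizedDensity f g x₂`. Since `f ≤ A`, every `D(x)` is at most `A G` with
`G = ∫_{x₂}^1 g(y - x₂) dy`. By Fubini over the triangle `x < y`,
`∫_0^1 D = ∫_{x₂}^1 g(y - x₂) F(y) dy` with `F(y) = ∫_0^y f`. As `∫_0^1 f = 1` and `f ≤ A`,
`F ≥ 1/2` on `[b, 1]` for `b = max x₂ (1 - 1/(2A))`, and since `g` is increasing the interval
`[b, 1]`, of relative length at least `1/(2A)` in `[x₂, 1]`, carries at least that fraction of
`G`. Hence `∫_0^1 D ≥ G / (4A)`. To apply measure theory, `f` and `g` are first extended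
constantly outside `[0, 1]`, which keeps them monotone and hence measurable.
-/

theorem integral_integral_triangle_swap {k : ℝ → ℝ → ℝ} {c : ℝ} (hc0 : 0 ≤ c) (hc1 : c ≤ 1)
    (hk : Integrable (Function.uncurry k)
      ((volume.restrict (Ioc 0 1)).prod (volume.restrict (Ioc c 1)))) :
    ∫ x in (0:ℝ)..1, ∫ y in (max x c)..1, k x y = ∫ y in c..1, ∫ x in (0:ℝ)..y, k x y := by
  set K : ℝ → ℝ → ℝ := fun x => (Ioi x).indicator (k x)
  have hK : Integrable (Function.uncurry K)
      ((volume.restrict (Ioc 0 1)).prod (volume.restrict (Ioc c 1))) :=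
    hk.indicator (measurableSet_lt measurable_fst measurable_snd)
  have h_inner_y : ∀ x ∈ Ioc (0:ℝ) 1, ∫ y in (max x c)..1, k x y = ∫ y in Ioc c 1, K x y := by
    intro x hx
    rw [integral_of_le (max_le hx.2 hc1), setIntegral_indicator measurableSet_Ioi, Ioc_inter_Ioi,
      max_comm]
  have h_inner_x : ∀ y ∈ Ioc c 1, ∫ x in (0:ℝ)..y, k x y = ∫ x in Ioc (0:ℝ) 1, K x y := by
    intro y hy
    have hKy : (fun x => K x y) = (Iio y).indicator (fun x => k x y) := by
      ext x; simp [K, indicator]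
    rw [hKy, integral_Ioc_eq_integral_Ioo, setIntegral_indicator measurableSet_Iio, Ioo_inter_Iio,
      min_eq_right hy.2, integral_of_le (hc0.trans hy.1.le), integral_Ioc_eq_integral_Ioo]
  calc ∫ x in (0:ℝ)..1, ∫ y in (max x c)..1, k x y
      = ∫ x in Ioc (0:ℝ) 1, ∫ y in Ioc c 1, K x y := by
        rw [integral_of_le zero_le_one]; exact setIntegral_congr_fun measurableSet_Ioc h_inner_y
    _ = ∫ y in Ioc c 1, ∫ x in Ioc (0:ℝ) 1, K x y := integral_integral_swap hK
    _ = ∫ y in c..1, ∫ x in (0:ℝ)..y, k x y := by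
        rw [integral_of_le hc1]; exact (setIntegral_congr_fun measurableSet_Ioc h_inner_x).symm

theorem MonotoneOn.mul_intervalIntegral_le_mul_intervalIntegral_tail {h : ℝ → ℝ} {a b e : ℝ}
    (hh : MonotoneOn h (Icc a e)) (hab : a ≤ b) (hbe : b ≤ e) :
    (e - b) * ∫ y in a..e, h y ≤ (e - a) * ∫ y in b..e, h y := by
  have hint : ∀ s ∈ Icc a e, ∀ t ∈ Icc a e, IntervalIntegrable h volume s t :=
    fun s hs t ht => (hh.mono (uIcc_subset_Icc hs ht)).intervalIntegrable
  have hb : b ∈ Icc a e := ⟨hab, hbe⟩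
  have ha : a ∈ Icc a e := ⟨le_rfl, hab.trans hbe⟩
  have he : e ∈ Icc a e := ⟨hab.trans hbe, le_rfl⟩
  have h_head : ∫ y in a..b, h y ≤ (b - a) * h b := by
    simpa [mul_comm] using integral_mono_on hab (hint a ha b hb) intervalIntegrable_const
      fun y hy => hh ⟨hy.1, hy.2.trans hbe⟩ hb hy.2
  have h_tail : (e - b) * h b ≤ ∫ y in b..e, h y := by
    simpa [mul_comm] using integral_mono_on hbe intervalIntegrable_const (hint b hb e he)
      fun y hy => hh hb ⟨hab.trans hy.1, hy.2⟩ hy.1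
  rw [← integral_add_adjacent_intervals (hint a ha b hb) (hint b hb e he)]
  nlinarith [mul_le_mul_of_nonneg_left h_head (sub_nonneg.2 hbe),
    mul_le_mul_of_nonneg_left h_tail (sub_nonneg.2 hab)]

theorem one_sub_mul_le_intervalIntegral {f : ℝ → ℝ} {A y : ℝ}
    (hf : IntervalIntegrable f volume 0 1) (hf_one : ∫ t in (0:ℝ)..1, f t = 1)
    (hf_le : ∀ t ∈ Icc y 1, f t ≤ A) (hy : y ∈ Icc (0:ℝ) 1) :
    1 - A * (1 - y) ≤ ∫ t in (0:ℝ)..y, f t := by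
  have h0y : IntervalIntegrable f volume 0 y := hf.mono_set <| by
    rw [uIcc_of_le hy.1, uIcc_of_le zero_le_one]; exact Icc_subset_Icc_right hy.2
  have hy1 : IntervalIntegrable f volume y 1 := hf.mono_set <| by
    rw [uIcc_of_le hy.2, uIcc_of_le zero_le_one]; exact Icc_subset_Icc_left hy.1
  have h_tail : ∫ t in y..1, f t ≤ A * (1 - y) := by
    simpa [mul_comm] using integral_mono_on hy.2 hy1 intervalIntegrable_const hf_le
  rw [← integral_add_adjacent_intervals h0y hy1] at hf_one
  linarith

theorem Measurable.intervalIntegrable_of_norm_le {f : ℝ → ℝ} {C : ℝ} (hf : Measurable f)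
    (hC : ∀ t, ‖f t‖ ≤ C) (a b : ℝ) : IntervalIntegrable f volume a b :=
  ⟨Measure.integrableOn_of_bounded measure_Ioc_lt_top.ne hf.aestronglyMeasurable (ae_of_all _ hC),
    Measure.integrableOn_of_bounded measure_Ioc_lt_top.ne hf.aestronglyMeasurable (ae_of_all _ hC)⟩

theorem MonotoneOn.exists_monotone_extension_Icc {f : ℝ → ℝ} {a b : ℝ}
    (hf : MonotoneOn f (Icc a b)) (hab : a ≤ b) :
    ∃ F : ℝ → ℝ, Monotone F ∧ EqOn F f (Icc a b) ∧ range F ⊆ f '' Icc a b :=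
  ⟨IccExtend hab fun t : Icc a b => f t, (monotoneOn_iff_monotone.1 hf).IccExtend hab,
    fun _ ht => IccExtend_of_mem hab _ ht,
    by rintro _ ⟨t, rfl⟩; exact mem_image_of_mem f (projIcc a b hab t).2⟩

noncomputable def unnormalizedDensity (f g : ℝ → ℝ) (c x : ℝ) : ℝ :=
  ∫ y in (max x c)..1, f (y - x) * g (y - c)

theorem unnormalizedDensity_congr {f f' g g' : ℝ → ℝ} {c x : ℝ} (hf : EqOn f f' (Icc 0 1))
    (hg : EqOn g g' (Icc 0 1)) (hc : c ∈ Icc (0:ℝ) 1) (hx : x ∈ Icc (0:ℝ) 1) :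
    unnormalizedDensity f g c x = unnormalizedDensity f' g' c x := by
  refine integral_congr fun y hy => ?_
  rw [uIcc_of_le (max_le hx.2 hc.2)] at hy
  have hyx : y - x ∈ Icc (0:ℝ) 1 :=
    ⟨by linarith [le_max_left x c, hy.1], by linarith [hy.2, hx.1]⟩
  have hyc : y - c ∈ Icc (0:ℝ) 1 :=
    ⟨by linarith [le_max_right x c, hy.1], by linarith [hy.2, hc.1]⟩
  simp only [hf hyx, hg hyc]

theorem integral_unnormalizedDensity_congr {f f' g g' : ℝ → ℝ} {c : ℝ} (hf : EqOn f f' (Icc 0 1))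
    (hg : EqOn g g' (Icc 0 1)) (hc : c ∈ Icc (0:ℝ) 1) :
    ∫ x in (0:ℝ)..1, unnormalizedDensity f g c x = ∫ x in (0:ℝ)..1, unnormalizedDensity f' g' c x :=
  integral_congr fun x hx =>
    unnormalizedDensity_congr hf hg hc (by rwa [uIcc_of_le zero_le_one] at hx)

section

variable {A c : ℝ} {f g : ℝ → ℝ}

theorem unnormalizedDensity_le (hf_nonneg : ∀ t, 0 ≤ f t) (hf_le : ∀ t, f t ≤ A)
    (hg_mono : Monotone g) (hg_nonneg : ∀ t, 0 ≤ g t) (hc : c ≤ 1) {x : ℝ} (hx : x ≤ 1) :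
    unnormalizedDensity f g c x ≤ A * ∫ y in c..1, g (y - c) := by
  have hcm : c ≤ max x c := le_max_right x c
  have hA : 0 ≤ A := (hf_nonneg 0).trans (hf_le 0)
  have hgc : Monotone fun y => g (y - c) := fun _ _ h => hg_mono (sub_le_sub_right h c)
  have hgi : IntegrableOn (fun y => A * g (y - c)) (Ioc c 1) :=
    hgc.intervalIntegrable.1.const_mul A
  rw [unnormalizedDensity, integral_of_le (max_le hx hc), integral_of_le hc,
    ← MeasureTheory.integral_const_mul]
  calc ∫ y in Ioc (max x c) 1, f (y - x) * g (y - c)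
      ≤ ∫ y in Ioc (max x c) 1, A * g (y - c) :=
        integral_mono_of_nonneg (ae_of_all _ fun y => mul_nonneg (hf_nonneg _) (hg_nonneg _))
          (hgi.mono_set (Ioc_subset_Ioc_left hcm))
          (ae_of_all _ fun y => mul_le_mul_of_nonneg_right (hf_le _) (hg_nonneg _))
    _ ≤ ∫ y in Ioc c 1, A * g (y - c) :=
        setIntegral_mono_set hgi
          (ae_of_all _ fun y => mul_nonneg hA (hg_nonneg _))
          (Ioc_subset_Ioc_left hcm).eventuallyLE

theorem integral_unnormalizedDensity {C : ℝ} (hf_meas : Measurable f)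
    (hf_bound : ∀ t, ‖f t‖ ≤ C) (hg_mono : Monotone g) (hc : c ∈ Icc (0:ℝ) 1) :
    ∫ x in (0:ℝ)..1, unnormalizedDensity f g c x =
      ∫ y in c..1, g (y - c) * ∫ t in (0:ℝ)..y, f t := by
  have hgc : Monotone fun y => g (y - c) := fun _ _ h => hg_mono (sub_le_sub_right h c)
  have hk : Integrable (fun p : ℝ × ℝ => f (p.2 - p.1) * g (p.2 - c))
      ((volume.restrict (Ioc 0 1)).prod (volume.restrict (Ioc c 1))) :=
    (hgc.intervalIntegrable.1.comp_snd _).bdd_mul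
      (hf_meas.comp (measurable_snd.sub measurable_fst)).aestronglyMeasurable
      (ae_of_all _ fun p => hf_bound _)
  simp only [unnormalizedDensity]
  rw [integral_integral_triangle_swap (k := fun x y => f (y - x) * g (y - c)) hc.1 hc.2 hk]
  refine integral_congr fun y _ => ?_
  rw [intervalIntegral.integral_mul_const, integral_comp_sub_left (fun t => f t) y, sub_self,
    sub_zero, mul_comm]

theorem integral_comp_sub_le_four_mul_integral_mul_primitive (hA : 1 ≤ A)
    (hf_int : ∀ a b, IntervalIntegrable f volume a b) (hf_nonneg : ∀ t, 0 ≤ f t)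
    (hf_le : ∀ t, f t ≤ A) (hf_one : ∫ t in (0:ℝ)..1, f t = 1)
    (hg_mono : Monotone g) (hg_nonneg : ∀ t, 0 ≤ g t) (hc : c ∈ Ico (0:ℝ) 1) :
    ∫ y in c..1, g (y - c) ≤ 4 * A * ∫ y in c..1, g (y - c) * ∫ t in (0:ℝ)..y, f t := by
  have hA0 : 0 < A := zero_lt_one.trans_le hA
  have hgc : Monotone fun y => g (y - c) := fun _ _ h => hg_mono (sub_le_sub_right h c)
  have hgF : ∀ a b, IntervalIntegrable (fun y => g (y - c) * ∫ t in (0:ℝ)..y, f t) volume a b :=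
    fun a b => hgc.intervalIntegrable.mul_continuousOn (continuous_primitive hf_int 0).continuousOn
  set b := max c (1 - 1 / (2 * A)) with hb
  have hcb : c ≤ b := le_max_left _ _
  have hb1 : b < 1 := max_lt hc.2 (sub_lt_self 1 (by positivity))
  have h_len : 1 - c ≤ 2 * A * (1 - b) := by
    rcases max_cases c (1 - 1 / (2 * A)) with ⟨h, _⟩ | ⟨h, _⟩ <;> rw [hb, h]
    · nlinarith [hc.2]
    · field_simp; linarith [hc.1]
  have h_half : ∀ y ∈ Icc b 1, 1 / 2 ≤ ∫ t in (0:ℝ)..y, f t := by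
    intro y hy
    have h_mass := one_sub_mul_le_intervalIntegral (hf_int 0 1) hf_one (fun t _ => hf_le t)
      ⟨hc.1.trans (hcb.trans hy.1), hy.2⟩
    have h_small : A * (1 - y) ≤ 1 / 2 := by
      have h1y : 1 - y ≤ 1 / (2 * A) := by linarith [le_max_right c (1 - 1 / (2 * A)), hy.1]
      rw [le_div_iff₀ (by positivity)] at h1y
      nlinarith
    linarith
  have h_avg :=
    (hgc.monotoneOn (Icc c 1)).mul_intervalIntegral_le_mul_intervalIntegral_tail hcb hb1.le
  have hT0 : 0 ≤ ∫ y in b..1, g (y - c) := integral_nonneg hb1.le fun _ _ => hg_nonneg _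
  have hT : ∫ y in b..1, g (y - c) ≤ 2 * ∫ y in c..1, g (y - c) * ∫ t in (0:ℝ)..y, f t := by
    rw [← integral_add_adjacent_intervals (hgF c b) (hgF b 1)]
    have h_head : 0 ≤ ∫ y in c..b, g (y - c) * ∫ t in (0:ℝ)..y, f t :=
      integral_nonneg hcb fun y hy =>
        mul_nonneg (hg_nonneg _) (integral_nonneg (hc.1.trans hy.1) fun t _ => hf_nonneg t)
    have h_tail : ∫ y in b..1, g (y - c) / 2 ≤ ∫ y in b..1, g (y - c) * ∫ t in (0:ℝ)..y, f t :=
      integral_mono_on hb1.le (hgc.intervalIntegrable.div_const 2) (hgF b 1) fun y hy => by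
        rw [div_eq_mul_one_div]; exact mul_le_mul_of_nonneg_left (h_half y hy) (hg_nonneg _)
    rw [intervalIntegral.integral_div] at h_tail
    linarith
  refine le_of_mul_le_mul_left ?_ (sub_pos.2 hb1)
  calc (1 - b) * ∫ y in c..1, g (y - c)
      ≤ (1 - c) * ∫ y in b..1, g (y - c) := h_avg
    _ ≤ 2 * A * (1 - b) * ∫ y in b..1, g (y - c) := mul_le_mul_of_nonneg_right h_len hT0
    _ ≤ 2 * A * (1 - b) * (2 * ∫ y in c..1, g (y - c) * ∫ t in (0:ℝ)..y, f t) :=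
        mul_le_mul_of_nonneg_left hT (by nlinarith)
    _ = (1 - b) * (4 * A * ∫ y in c..1, g (y - c) * ∫ t in (0:ℝ)..y, f t) := by ring

theorem unnormalizedDensity_div_integral_le (hA : 1 ≤ A) (hf_meas : Measurable f)
    (hf_nonneg : ∀ t, 0 ≤ f t) (hf_le : ∀ t, f t ≤ A) (hf_one : ∫ t in (0:ℝ)..1, f t = 1)
    (hg_mono : Monotone g) (hg_nonneg : ∀ t, 0 ≤ g t) (hc : c ∈ Ico (0:ℝ) 1) {x : ℝ}
    (hx : x ≤ 1) :
    unnormalizedDensity f g c x / ∫ x' in (0:ℝ)..1, unnormalizedDensity f g c x' ≤ 4 * A ^ 2 := by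
  have hA0 : 0 < A := zero_lt_one.trans_le hA
  have hf_bound : ∀ t, ‖f t‖ ≤ A := fun t => by
    rw [Real.norm_of_nonneg (hf_nonneg t)]; exact hf_le t
  have hG0 : 0 ≤ ∫ y in c..1, g (y - c) := integral_nonneg hc.2.le fun _ _ => hg_nonneg _
  have hGZ := integral_comp_sub_le_four_mul_integral_mul_primitive hA
    (hf_meas.intervalIntegrable_of_norm_le hf_bound) hf_nonneg hf_le hf_one hg_mono hg_nonneg hc
  rw [← integral_unnormalizedDensity hf_meas hf_bound hg_mono (Ico_subset_Icc_self hc)] at hGZ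
  refine div_le_of_le_mul₀ ((mul_nonneg_iff_of_pos_left (by positivity)).1 (hG0.trans hGZ))
    (by positivity) ?_
  calc unnormalizedDensity f g c x
      ≤ A * ∫ y in c..1, g (y - c) :=
        unnormalizedDensity_le hf_nonneg hf_le hg_mono hg_nonneg hc.2.le hx
    _ ≤ A * (4 * A * ∫ x' in (0:ℝ)..1, unnormalizedDensity f g c x') :=
        mul_le_mul_of_nonneg_left hGZ hA0.le
    _ = 4 * A ^ 2 * ∫ x' in (0:ℝ)..1, unnormalizedDensity f g c x' := by ring

end

theorem stmt11_general (A : ℝ) (hA : 1 ≤ A) (f g : ℝ → ℝ)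
    (hf_mono : MonotoneOn f (Icc (0:ℝ) 1))
    (hf_nonneg : ∀ t ∈ Icc (0:ℝ) 1, 0 ≤ f t)
    (hf_le : ∀ t ∈ Icc (0:ℝ) 1, f t ≤ A)
    (hf_one : (∫ t in (0:ℝ)..1, f t) = 1)
    (hg_mono : MonotoneOn g (Icc (0:ℝ) 1))
    (hg_nonneg : ∀ t ∈ Icc (0:ℝ) 1, 0 ≤ g t)
    (x₂ : ℝ) (hx₂ : x₂ ∈ Ico (0:ℝ) 1) :
    ∀ x ∈ Icc (0:ℝ) 1,
      (∫ y in (max x x₂)..1, f (y - x) * g (y - x₂)) /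
        (∫ x' in (0:ℝ)..1, ∫ y in (max x' x₂)..1, f (y - x') * g (y - x₂)) ≤ 4 * A ^ 2 := by
  obtain ⟨f', hf'_mono, hf'_eq, hf'_range⟩ := hf_mono.exists_monotone_extension_Icc zero_le_one
  obtain ⟨g', hg'_mono, hg'_eq, hg'_range⟩ := hg_mono.exists_monotone_extension_Icc zero_le_one
  have hf'_one : ∫ t in (0:ℝ)..1, f' t = 1 := by
    refine (integral_congr ?_).trans hf_one
    rwa [uIcc_of_le zero_le_one]
  have hf'_bound : ∀ t, 0 ≤ f' t ∧ f' t ≤ A := fun t => by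
    obtain ⟨s, hs, hst⟩ := hf'_range (mem_range_self t)
    exact hst ▸ ⟨hf_nonneg s hs, hf_le s hs⟩
  have hg'_nonneg : ∀ t, 0 ≤ g' t := fun t => by
    obtain ⟨s, hs, hst⟩ := hg'_range (mem_range_self t)
    exact hst ▸ hg_nonneg s hs
  have hc := Ico_subset_Icc_self hx₂
  intro x hx
  show unnormalizedDensity f g x₂ x / ∫ x' in (0:ℝ)..1, unnormalizedDensity f g x₂ x' ≤ 4 * A ^ 2
  rw [unnormalizedDensity_congr hf'_eq.symm hg'_eq.symm hc hx,
    integral_unnormalizedDensity_congr hf'_eq.symm hg'_eq.symm hc]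
  exact unnormalizedDensity_div_integral_le hA hf'_mono.measurable (fun t => (hf'_bound t).1)
    (fun t => (hf'_bound t).2) hf'_one hg'_mono hg'_nonneg hx₂ hx.2

/-- The conditional density of the first lower particle of a sawtooth
model given the position `x₂` of the second lower particle is bounded by `4A²` when the
first interaction density `f` is normalized and bounded by `A`. -/
theorem stmt11 (A : ℝ) (hA : 1 ≤ A) (f g : ℝ → ℝ)
    (hf_mono : MonotoneOn f (Icc (0:ℝ) 1))
    (hf_C1 : ContDiffOn ℝ 1 f (Icc (0:ℝ) 1))
    (hf_nonneg : ∀ t ∈ Icc (0:ℝ) 1, 0 ≤ f t)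
    (hf_le : ∀ t ∈ Icc (0:ℝ) 1, f t ≤ A)
    (hf_one : (∫ t in (0:ℝ)..1, f t) = 1)
    (hg_mono : MonotoneOn g (Icc (0:ℝ) 1))
    (hg_nonneg : ∀ t ∈ Icc (0:ℝ) 1, 0 ≤ g t)
    (hg_C1 : ContDiffOn ℝ 1 g (Icc (0:ℝ) 1))
    (x₂ : ℝ) (hx₂ : x₂ ∈ Ico (0:ℝ) 1)
    (hpos : 0 < ∫ x in (0:ℝ)..1, ∫ y in (max x x₂)..1, f (y - x) * g (y - x₂)) :
    ∀ x ∈ Icc (0:ℝ) 1,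
      (∫ y in (max x x₂)..1, f (y - x) * g (y - x₂)) /
        (∫ x' in (0:ℝ)..1, ∫ y in (max x' x₂)..1, f (y - x') * g (y - x₂)) ≤ 4 * A ^ 2 :=
  stmt11_general A hA f g hf_mono hf_nonneg hf_le hf_one hg_mono hg_nonneg x₂ hx₂
end

section
/- For every sawtooth model of size n and every η ∈ (0,1), the probability under the model's law that all lower particles satisfy X_i ≥ η for i = 1,…,n+1 is at most (1−η)^{2n+1}. -/
open MeasureTheory Set
open scoped ENNReal

noncomputable section

/-- A sawtooth model of size `n`: interaction densities `f i`, `g i` on `[0,1]`,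
nonnegative, monotone increasing and `C¹`. -/
structure Sawtooth (n : ℕ) where
  f : Fin n → ℝ → ℝ
  g : Fin n → ℝ → ℝ
  f_nonneg : ∀ i, ∀ t ∈ Set.Icc (0:ℝ) 1, 0 ≤ f i t
  g_nonneg : ∀ i, ∀ t ∈ Set.Icc (0:ℝ) 1, 0 ≤ g i t
  f_mono : ∀ i, MonotoneOn (f i) (Set.Icc (0:ℝ) 1)
  g_mono : ∀ i, MonotoneOn (g i) (Set.Icc (0:ℝ) 1)
  f_smooth : ∀ i, ContDiffOn ℝ 1 (f i) (Set.Icc (0:ℝ) 1)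
  g_smooth : ∀ i, ContDiffOn ℝ 1 (g i) (Set.Icc (0:ℝ) 1)

namespace Sawtooth

variable {n : ℕ}

/-- The configuration box `[0,1]^{n+1} × [0,1]^n` (lower particles `x`, upper particles `y`). -/
def box (n : ℕ) : Set ((Fin (n + 1) → ℝ) × (Fin n → ℝ)) :=
  (Set.univ.pi fun _ => Set.Icc (0:ℝ) 1) ×ˢ (Set.univ.pi fun _ => Set.Icc (0:ℝ) 1)

/-- Unnormalized density `∏ i, 1_{x_i ≤ y_i} 1_{x_{i+1} ≤ y_i} f_i(y_i - x_i) g_i(y_i - x_{i+1})`. -/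
def dens (M : Sawtooth n) (x : Fin (n + 1) → ℝ) (y : Fin n → ℝ) : ℝ :=
  ∏ i : Fin n,
    (if x i.castSucc ≤ y i ∧ x i.succ ≤ y i
      then M.f i (y i - x i.castSucc) * M.g i (y i - x i.succ) else 0)

/-- Normalizing constant (volume) of the model. -/
def V (M : Sawtooth n) : ℝ := ∫ p in box n, dens M p.1 p.2

/-- The Gibbs law of the model on `[0,1]^{n+1} × [0,1]^n`. -/
def law (M : Sawtooth n) : Measure ((Fin (n + 1) → ℝ) × (Fin n → ℝ)) :=
  (volume.restrict (box n)).withDensity fun p => ENNReal.ofReal (dens M p.1 p.2 / M.V)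

/-- Joint density of the first and last lower particles `(X_I, X_F)`. -/
def dXIXF (M : Sawtooth n) (x y : ℝ) : ℝ :=
  (∫ p in box n,
    dens M (Function.update (Function.update p.1 0 x) (Fin.last n) y) p.2) / M.V

/-- Density of the first lower particle `X_I`. -/
def dXI (M : Sawtooth n) (x : ℝ) : ℝ := ∫ y in Icc (0:ℝ) 1, M.dXIXF x y

/-- Density of the last lower particle `X_F`. -/
def dXF (M : Sawtooth n) (y : ℝ) : ℝ := ∫ x in Icc (0:ℝ) 1, M.dXIXF x y

/-- Cdf of `X_I`. -/
def FXI (M : Sawtooth n) (t : ℝ) : ℝ := ∫ x in (0:ℝ)..t, M.dXI x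

/-- Conditional cdf of `X_I` given `X_F = y`. -/
def FXIcond (M : Sawtooth n) (y t : ℝ) : ℝ :=
  (∫ x in (0:ℝ)..t, M.dXIXF x y) / M.dXF y

/-- The model is normalized: all interaction densities integrate to `1` on `[0,1]`. -/
def Normalized (M : Sawtooth n) : Prop :=
  ∀ i, (∫ t in (0:ℝ)..1, M.f i t) = 1 ∧ (∫ t in (0:ℝ)..1, M.g i t) = 1

/-- The model is bounded by `A`. -/
def BoundedBy (M : Sawtooth n) (A : ℝ) : Prop :=
  ∀ i, (∀ t ∈ Set.Icc (0:ℝ) 1, M.f i t ≤ A) ∧ (∀ t ∈ Set.Icc (0:ℝ) 1, M.g i t ≤ A)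

/-- The model is convex: all interaction densities are log-concave, i.e. their
logarithmic derivatives are antitone on the set where they are positive. -/
def IsConvex (M : Sawtooth n) : Prop :=
  ∀ i,
    AntitoneOn (fun t => derivWithin (M.f i) (Set.Icc 0 1) t / M.f i t)
      (Set.Icc (0:ℝ) 1 ∩ {t | 0 < M.f i t}) ∧
    AntitoneOn (fun t => derivWithin (M.g i) (Set.Icc 0 1) t / M.g i t)
      (Set.Icc (0:ℝ) 1 ∩ {t | 0 < M.g i t})

end Sawtooth

/-- `Γ⁺(f)(t) = (∫_0^t f)/(∫_0^1 f)`. -/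
def Gplus (f : ℝ → ℝ) (t : ℝ) : ℝ := (∫ u in (0:ℝ)..t, f u) / (∫ u in (0:ℝ)..1, f u)

/-- `Γ⁻(f)(t) = (∫_{1-t}^1 f)/(∫_0^1 f)`. -/
def Gminus (f : ℝ → ℝ) (t : ℝ) : ℝ := (∫ u in (1 - t)..(1:ℝ), f u) / (∫ u in (0:ℝ)..1, f u)

/-!
On the support of the density every upper particle lies above its two lower neighbours, so
on the event `{∀ i, η ≤ X_i}` all `2n+1` coordinates lie in `[η,1]`. That cube is the image of
the unit box under `q ↦ (1-η)•q + η•1`, whose Jacobian is `(1-η)^(2n+1)`, and pulling the density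
back along this map can only decrease it: every gap `y_i - x_j` is multiplied by `1-η`, and the
`f_i`, `g_i` are nonnegative and increasing.
-/

open Module

-- `volume` on a product unfolds to `volume.prod volume`, for which Mathlib has the instance.
instance isAddHaarMeasure_volume_prod {E F : Type*} [NormedAddCommGroup E]
    [NormedSpace ℝ E] [MeasureSpace E] [BorelSpace E] [FiniteDimensional ℝ E]
    [(volume : Measure E).IsAddHaarMeasure] [NormedAddCommGroup F] [NormedSpace ℝ F]
    [MeasureSpace F] [BorelSpace F] [FiniteDimensional ℝ F]
    [(volume : Measure F).IsAddHaarMeasure] :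
    (volume : Measure (E × F)).IsAddHaarMeasure :=
  Measure.prod.instIsAddHaarMeasure _ _

theorem setLIntegral_image_smul_add {E : Type*} [NormedAddCommGroup E] [NormedSpace ℝ E]
    [FiniteDimensional ℝ E] [MeasurableSpace E] [BorelSpace E] (μ : Measure E)
    [μ.IsAddHaarMeasure] {r : ℝ} (hr : r ≠ 0) (c : E) {s : Set E} (hs : MeasurableSet s)
    (g : E → ℝ≥0∞) :
    ∫⁻ x in (fun q => r • q + c) '' s, g x ∂μ
      = ENNReal.ofReal (|r| ^ finrank ℝ E) * ∫⁻ q in s, g (r • q + c) ∂μ := by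
  have hderiv : ∀ q ∈ s, HasFDerivWithinAt (fun q : E => r • q + c)
      (r • ContinuousLinearMap.id ℝ E) s q := fun q _ =>
    ((hasFDerivAt_id q).const_smul r).add_const c |>.hasFDerivWithinAt
  have hinj : InjOn (fun q : E => r • q + c) s := fun p _ q _ h => by
    simpa [hr] using h
  rw [lintegral_image_eq_lintegral_abs_det_fderiv_mul μ hs hderiv hinj,
    lintegral_const_mul' _ _ ENNReal.ofReal_ne_top]
  simp [ContinuousLinearMap.det, LinearMap.det_smul, abs_pow]

theorem setLIntegral_le_of_inter_support_subset {α : Type*} [MeasurableSpace α]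
    {μ : Measure α} {s t : Set α} {f : α → ℝ≥0∞} (hs : MeasurableSet s)
    (hst : s ∩ f.support ⊆ t) : ∫⁻ x in s, f x ∂μ ≤ ∫⁻ x in t, f x ∂μ := by
  rw [← lintegral_indicator hs, ← indicator_inter_support]
  exact (lintegral_mono (indicator_le_indicator_of_subset hst fun _ => zero_le)).trans
    (lintegral_indicator_le _ _)

def toothWeight (F G : ℝ → ℝ) (x x' y : ℝ) : ℝ :=
  if x ≤ y ∧ x' ≤ y then F (y - x) * G (y - x') else 0

section toothWeight

variable {F G : ℝ → ℝ} {x x' y : ℝ}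

theorem toothWeight_nonneg (hF₀ : ∀ t ∈ Icc (0:ℝ) 1, 0 ≤ F t)
    (hG₀ : ∀ t ∈ Icc (0:ℝ) 1, 0 ≤ G t) (hx : 0 ≤ x) (hx' : 0 ≤ x') (hy : y ≤ 1) :
    0 ≤ toothWeight F G x x' y := by
  unfold toothWeight
  split_ifs with h
  · exact mul_nonneg (hF₀ _ ⟨by linarith [h.1], by linarith⟩)
      (hG₀ _ ⟨by linarith [h.2], by linarith⟩)
  · exact le_rfl

theorem le_of_toothWeight_ne_zero (h : toothWeight F G x x' y ≠ 0) : x ≤ y ∧ x' ≤ y := by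
  by_contra hc
  exact h (if_neg hc)

theorem toothWeight_smul_add_le (hF₀ : ∀ t ∈ Icc (0:ℝ) 1, 0 ≤ F t)
    (hG₀ : ∀ t ∈ Icc (0:ℝ) 1, 0 ≤ G t) (hF : MonotoneOn F (Icc 0 1))
    (hG : MonotoneOn G (Icc 0 1)) {r c : ℝ} (hr₀ : 0 < r) (hr₁ : r ≤ 1) (hx : 0 ≤ x)
    (hx' : 0 ≤ x') (hy : y ≤ 1) :
    toothWeight F G (r * x + c) (r * x' + c) (r * y + c) ≤ toothWeight F G x x' y := by
  simp only [toothWeight, add_le_add_iff_right, mul_le_mul_iff_of_pos_left hr₀,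
    add_sub_add_right_eq_sub, ← mul_sub]
  split_ifs with h
  · have hd : y - x ∈ Icc (0:ℝ) 1 := ⟨by linarith [h.1], by linarith⟩
    have hd' : y - x' ∈ Icc (0:ℝ) 1 := ⟨by linarith [h.2], by linarith⟩
    have hscale : ∀ {d : ℝ}, d ∈ Icc (0:ℝ) 1 → r * d ∈ Icc (0:ℝ) 1 ∧ r * d ≤ d :=
      fun hd => ⟨⟨by nlinarith [hd.1], by nlinarith [hd.1, hd.2]⟩, by nlinarith [hd.1]⟩
    exact mul_le_mul (hF (hscale hd).1 hd (hscale hd).2) (hG (hscale hd').1 hd' (hscale hd').2)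
      (hG₀ _ (hscale hd').1) (hF₀ _ hd)
  · exact le_rfl

end toothWeight

namespace Sawtooth

variable {n : ℕ} (M : Sawtooth n)

theorem measurableSet_box (n : ℕ) : MeasurableSet (box n) :=
  (MeasurableSet.univ_pi fun _ => measurableSet_Icc).prod
    (MeasurableSet.univ_pi fun _ => measurableSet_Icc)

theorem dens_eq_prod_toothWeight (x : Fin (n + 1) → ℝ) (y : Fin n → ℝ) :
    M.dens x y = ∏ i, toothWeight (M.f i) (M.g i) (x i.castSucc) (x i.succ) (y i) :=
  rfl

theorem dens_nonneg {p : (Fin (n + 1) → ℝ) × (Fin n → ℝ)} (hp : p ∈ box n) :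
    0 ≤ M.dens p.1 p.2 :=
  Finset.prod_nonneg fun i _ => toothWeight_nonneg (M.f_nonneg i) (M.g_nonneg i)
    (hp.1 _ trivial).1 (hp.1 _ trivial).1 (hp.2 i trivial).2

theorem lintegral_dens_eq_ofReal_V (hV : 0 < M.V) :
    ∫⁻ p in box n, ENNReal.ofReal (M.dens p.1 p.2) = ENNReal.ofReal M.V := by
  have hint : IntegrableOn (fun p => M.dens p.1 p.2) (box n) := by
    by_contra h
    exact hV.ne' (integral_undef h)
  exact (ofReal_integral_eq_lintegral_ofReal hint
    ((ae_restrict_iff' (measurableSet_box n)).2 (ae_of_all _ fun _ => M.dens_nonneg))).symm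

theorem law_apply (hV : 0 < M.V) (s : Set ((Fin (n + 1) → ℝ) × (Fin n → ℝ))) :
    M.law s = (∫⁻ p in s ∩ box n, ENNReal.ofReal (M.dens p.1 p.2)) / ENNReal.ofReal M.V := by
  simp_rw [law, withDensity_apply', Measure.restrict_restrict' (measurableSet_box n),
    ENNReal.ofReal_div_of_pos hV, div_eq_mul_inv]
  exact lintegral_mul_const' _ _ (ENNReal.inv_ne_top.2 (ENNReal.ofReal_pos.2 hV).ne')

theorem dens_shrink_le {η : ℝ} (hη₀ : 0 ≤ η) (hη₁ : η < 1)
    {p : (Fin (n + 1) → ℝ) × (Fin n → ℝ)} (hp : p ∈ box n) :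
    M.dens ((1 - η) • p + η • 1).1 ((1 - η) • p + η • 1).2 ≤ M.dens p.1 p.2 := by
  have hx : ∀ j, 0 ≤ p.1 j := fun j => (hp.1 j trivial).1
  have hy : ∀ i, p.2 i ≤ 1 := fun i => (hp.2 i trivial).2
  have hr : 0 < 1 - η := sub_pos.2 hη₁
  simp only [dens_eq_prod_toothWeight, Prod.fst_add, Prod.snd_add, Prod.smul_fst,
    Prod.smul_snd, Prod.fst_one, Prod.snd_one, Pi.add_apply, Pi.smul_apply, Pi.one_apply,
    smul_eq_mul, mul_one]
  refine Finset.prod_le_prod (fun i _ => ?_) (fun i _ => ?_)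
  · exact toothWeight_nonneg (M.f_nonneg i) (M.g_nonneg i) (by nlinarith [hx i.castSucc])
      (by nlinarith [hx i.succ]) (by nlinarith [hy i])
  · exact toothWeight_smul_add_le (M.f_nonneg i) (M.g_nonneg i) (M.f_mono i) (M.g_mono i) hr
      (by linarith) (hx _) (hx _) (hy i)

theorem mem_image_shrink_box {η : ℝ} (hη₁ : η < 1) {p : (Fin (n + 1) → ℝ) × (Fin n → ℝ)}
    (hx : ∀ j, p.1 j ∈ Icc η 1) (hy : ∀ i, p.2 i ∈ Icc η 1) :
    p ∈ (fun q => (1 - η) • q + η • 1) '' box n := by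
  have hr : 0 < 1 - η := sub_pos.2 hη₁
  have hunit : ∀ {t : ℝ}, t ∈ Icc η 1 → (1 - η)⁻¹ * (t - η) ∈ Icc (0:ℝ) 1 := fun ht => by
    rw [inv_mul_eq_div]
    exact ⟨div_nonneg (by linarith [ht.1]) hr.le, (div_le_one hr).2 (by linarith [ht.2])⟩
  refine ⟨(1 - η)⁻¹ • (p - η • 1), ⟨fun j _ => ?_, fun i _ => ?_⟩, ?_⟩
  · simpa using hunit (hx j)
  · simpa using hunit (hy i)
  · simp only [smul_smul, mul_inv_cancel₀ hr.ne', one_smul, sub_add_cancel]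

theorem mem_image_shrink_box_of_dens_ne_zero {η : ℝ} (hη₁ : η < 1)
    {p : (Fin (n + 1) → ℝ) × (Fin n → ℝ)} (hp : p ∈ {p | ∀ j, η ≤ p.1 j} ∩ box n)
    (hdens : M.dens p.1 p.2 ≠ 0) : p ∈ (fun q => (1 - η) • q + η • 1) '' box n := by
  rw [dens_eq_prod_toothWeight, Finset.prod_ne_zero_iff] at hdens
  refine mem_image_shrink_box hη₁ (fun j => ⟨hp.1 j, (hp.2.1 j trivial).2⟩)
    (fun i => ⟨?_, (hp.2.2 i trivial).2⟩)
  exact (hp.1 i.castSucc).trans (le_of_toothWeight_ne_zero (hdens i (Finset.mem_univ i))).1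

end Sawtooth

theorem stmt12_general (n : ℕ) (M : Sawtooth n) (hV : 0 < M.V)
    (η : ℝ) (hη : η ∈ Ioo (0:ℝ) 1) :
    M.law {p | ∀ i : Fin (n + 1), η ≤ p.1 i} ≤ ENNReal.ofReal ((1 - η) ^ (2 * n + 1)) := by
  set S := {p : (Fin (n + 1) → ℝ) × (Fin n → ℝ) | ∀ i : Fin (n + 1), η ≤ p.1 i}
  set D := fun p : (Fin (n + 1) → ℝ) × (Fin n → ℝ) => ENNReal.ofReal (M.dens p.1 p.2)
  set T := fun q : (Fin (n + 1) → ℝ) × (Fin n → ℝ) => (1 - η) • q + η • 1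
  set c := ENNReal.ofReal ((1 - η) ^ (2 * n + 1))
  have hbox := Sawtooth.measurableSet_box n
  have hr : 0 < 1 - η := sub_pos.2 hη.2
  have hS : MeasurableSet S := by measurability
  have hdim : finrank ℝ ((Fin (n + 1) → ℝ) × (Fin n → ℝ)) = 2 * n + 1 := by
    simp [finrank_prod]; ring
  calc M.law S = (∫⁻ p in S ∩ Sawtooth.box n, D p) / ENNReal.ofReal M.V := M.law_apply hV S
    _ ≤ (∫⁻ p in T '' Sawtooth.box n, D p) / ENNReal.ofReal M.V := by
      gcongr ?_ / _
      refine setLIntegral_le_of_inter_support_subset (hS.inter hbox)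
        fun p hp => M.mem_image_shrink_box_of_dens_ne_zero hη.2 hp.1 fun h => hp.2 ?_
      simp [D, h]
    _ = c * (∫⁻ q in Sawtooth.box n, D (T q)) / ENNReal.ofReal M.V := by
      rw [setLIntegral_image_smul_add _ hr.ne' _ hbox, hdim, abs_of_pos hr]
    _ ≤ c * ENNReal.ofReal M.V / ENNReal.ofReal M.V := by
      rw [← M.lintegral_dens_eq_ofReal_V hV]
      gcongr _ * ?_ / _
      exact setLIntegral_mono' hbox fun q hq =>
        ENNReal.ofReal_le_ofReal (M.dens_shrink_le hη.1.le hη.2 hq)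
    _ = c := ENNReal.mul_div_cancel_right (ENNReal.ofReal_pos.2 hV).ne' ENNReal.ofReal_ne_top

/-- In any sawtooth model the probability that all lower particles lie
above `η` is at most `(1-η)^{2n+1}`. -/
theorem stmt12 (n : ℕ) (hn : 1 ≤ n) (M : Sawtooth n) (hV : 0 < M.V)
    (η : ℝ) (hη : η ∈ Ioo (0:ℝ) 1) :
    M.law {p | ∀ i : Fin (n + 1), η ≤ p.1 i} ≤ ENNReal.ofReal ((1 - η) ^ (2 * n + 1)) :=
  stmt12_general n M hV η hη
end
end

section
/- Let M > 0 and let f, g : [0,1] → ℝ be continuously differentiable functions with ‖f′ − g′‖_∞ ≤ M. Let F, G : [0,1] → ℝ be primitives of f and g respectively. Then for every ε with 0 < ε ≤ M: if ‖F − G‖_∞ ≤ ε²/(8M), then ‖f − g‖_∞ ≤ ε. (This is the paper's Lemma relating closeness of cumulative distribution functions to closeness of densities, with an adjusted constant.) -/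
/-!
On an interval `[a, b]` of length `δ := ε / (2M)` around `t`, the mean value theorem applied to
the primitive `F - G` gives a point `c` where `|f c - g c| ≤ 2 ε²/(8M) / δ = ε/2`, and the bound
`M` on `f' - g'` moves this to `t` at a cost of at most `M δ = ε/2`. The hypothesis `ε ≤ M`
makes `δ ≤ 1/2`, so such an interval fits in `[0, 1]`.
-/

open Set

lemma exists_mem_Icc_add_subset_Icc {u v t δ : ℝ} (ht : t ∈ Icc u v) (hδ : 0 ≤ δ)
    (hδv : δ ≤ v - u) : ∃ a, t ∈ Icc a (a + δ) ∧ Icc a (a + δ) ⊆ Icc u v := by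
  refine ⟨min t (v - δ), ⟨min_le_left _ _, ?_⟩, Icc_subset_Icc ?_ ?_⟩
  · rcases min_cases t (v - δ) with ⟨h, -⟩ | ⟨h, -⟩ <;> rw [h] <;> linarith [ht.2]
  · exact le_min ht.1 (by linarith)
  · linarith [min_le_right t (v - δ)]

lemma exists_abs_le_of_hasDerivAt_of_abs_le {Φ φ : ℝ → ℝ} {a b η : ℝ} (hab : a < b)
    (hΦ : ∀ x ∈ Icc a b, HasDerivAt Φ (φ x) x) (hη : ∀ x ∈ Icc a b, |Φ x| ≤ η) :
    ∃ c ∈ Icc a b, |φ c| ≤ 2 * η / (b - a) := by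
  obtain ⟨c, hc, hslope⟩ := exists_hasDerivAt_eq_slope Φ φ hab
    (fun x hx => (hΦ x hx).continuousAt.continuousWithinAt)
    (fun x hx => hΦ x (Ioo_subset_Icc_self hx))
  refine ⟨c, Ioo_subset_Icc_self hc, ?_⟩
  rw [hslope, abs_div, abs_of_pos (sub_pos.2 hab), two_mul]
  gcongr
  exact (abs_sub _ _).trans
    (add_le_add (hη b (right_mem_Icc.2 hab.le)) (hη a (left_mem_Icc.2 hab.le)))

lemma abs_le_of_hasDerivAt_of_abs_le {Φ φ φ' : ℝ → ℝ} {a b η M : ℝ} (hab : a < b)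
    (hΦ : ∀ x ∈ Icc a b, HasDerivAt Φ (φ x) x) (hη : ∀ x ∈ Icc a b, |Φ x| ≤ η)
    (hφ : ∀ x ∈ Icc a b, HasDerivWithinAt φ (φ' x) (Icc a b) x)
    (hφ' : ∀ x ∈ Icc a b, |φ' x| ≤ M) {t : ℝ} (ht : t ∈ Icc a b) :
    |φ t| ≤ 2 * η / (b - a) + M * (b - a) := by
  obtain ⟨c, hc, hφc⟩ := exists_abs_le_of_hasDerivAt_of_abs_le hab hΦ hη
  have hlip : |φ t - φ c| ≤ M * |t - c| :=
    (convex_Icc a b).norm_image_sub_le_of_norm_hasDerivWithin_le hφ hφ' hc ht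
  have htc : |t - c| ≤ b - a := abs_sub_le_of_le_of_le ht.1 ht.2 hc.1 hc.2
  have hM : 0 ≤ M := (abs_nonneg _).trans (hφ' t ht)
  calc |φ t| ≤ |φ t - φ c| + |φ c| := norm_le_norm_sub_add (φ t) (φ c)
    _ ≤ M * (b - a) + 2 * η / (b - a) := add_le_add (hlip.trans (by gcongr)) hφc
    _ = _ := add_comm _ _

theorem stmt13_general (M : ℝ) (hM : 0 < M) (f g f' g' F G : ℝ → ℝ)
    (hf : ∀ t ∈ Icc (0:ℝ) 1, HasDerivAt f (f' t) t)
    (hg : ∀ t ∈ Icc (0:ℝ) 1, HasDerivAt g (g' t) t)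
    (hderiv : ∀ t ∈ Icc (0:ℝ) 1, |f' t - g' t| ≤ M)
    (hF : ∀ t ∈ Icc (0:ℝ) 1, HasDerivAt F (f t) t)
    (hG : ∀ t ∈ Icc (0:ℝ) 1, HasDerivAt G (g t) t)
    (ε : ℝ) (hε : 0 < ε) (hεM : ε ≤ M)
    (hFG : ∀ t ∈ Icc (0:ℝ) 1, |F t - G t| ≤ ε ^ 2 / (8 * M)) :
    ∀ t ∈ Icc (0:ℝ) 1, |f t - g t| ≤ ε := by
  intro t ht
  set δ := ε / (2 * M)
  have hδ : 0 < δ := by positivity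
  have hδ_le : δ ≤ 1 - 0 := by
    rw [div_le_iff₀ (by positivity)]
    linarith
  obtain ⟨a, hta, hsub⟩ := exists_mem_Icc_add_subset_Icc ht hδ.le hδ_le
  have bound := abs_le_of_hasDerivAt_of_abs_le (lt_add_of_pos_right a hδ)
    (fun x hx => (hF x (hsub hx)).sub (hG x (hsub hx))) (fun x hx => hFG x (hsub hx))
    (fun x hx => ((hf x (hsub hx)).sub (hg x (hsub hx))).hasDerivWithinAt)
    (fun x hx => hderiv x (hsub hx)) hta
  calc |f t - g t| ≤ 2 * (ε ^ 2 / (8 * M)) / δ + M * δ := by rwa [add_sub_cancel_left] at bound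
    _ = ε := by simp only [δ]; field_simp; ring

/-- If primitives `F`, `G` of `f`, `g` are `ε²/(8M)`-close on `[0,1]`
and the derivatives of `f` and `g` differ by at most `M` on `[0,1]`, then `f` and `g` are
`ε`-close on `[0,1]` (for `0 < ε ≤ M`). -/
theorem stmt13 (M : ℝ) (hM : 0 < M) (f g f' g' F G : ℝ → ℝ)
    (hf : ∀ t ∈ Icc (0:ℝ) 1, HasDerivAt f (f' t) t)
    (hg : ∀ t ∈ Icc (0:ℝ) 1, HasDerivAt g (g' t) t)
    (hf'c : ContinuousOn f' (Icc (0:ℝ) 1))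
    (hg'c : ContinuousOn g' (Icc (0:ℝ) 1))
    (hderiv : ∀ t ∈ Icc (0:ℝ) 1, |f' t - g' t| ≤ M)
    (hF : ∀ t ∈ Icc (0:ℝ) 1, HasDerivAt F (f t) t)
    (hG : ∀ t ∈ Icc (0:ℝ) 1, HasDerivAt G (g t) t)
    (ε : ℝ) (hε : 0 < ε) (hεM : ε ≤ M)
    (hFG : ∀ t ∈ Icc (0:ℝ) 1, |F t - G t| ≤ ε ^ 2 / (8 * M)) :
    ∀ t ∈ Icc (0:ℝ) 1, |f t - g t| ≤ ε :=
  stmt13_general M hM f g f' g' F G hf hg hderiv hF hG ε hε hεM hFG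
end

section
/- For each integer b ≥ 2 define, for x ∈ [0,1] and y ∈ (0,1], d_b(x,y) = (1 − x^b − (1−y)^b + (max(x−y,0))^b) / ((1 − 1/(b+1))·(1 − (1−y)^b) + (y/(b+1))·(1−y)^b). Then sup_{x ∈ [0,1], y ∈ (0,1]} | d_b(x,y) − (1 − x^b) | → 0 as b → ∞; consequently sup_{x ∈ [0,1], y,y′ ∈ (0,1]} | d_b(x,y) − d_b(x,y′) | → 0 as b → ∞. -/
/-!
Write `u = (1 - y)^b` and `t = 1 - u`. The denominator of `d_b(x, y)` is at least `t / 2`, and the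
numerator differs from `(1 - x^b)` times the denominator by
`(max(x - y, 0)^b - x^b u) + (1 - x^b)(t - y u)/(b + 1)`.
Both terms are at most `t / b`: the second trivially, the first because it is at most
`y (1 - y)^(b-1)`, while `t = 1 - (1 - y)^b ≥ b y (1 - y)^(b-1)`.
Hence `|d_b(x, y) - (1 - x^b)| ≤ 4 / b`.
-/

open Set

noncomputable section

/-- The conditional density of the first cell value of the composition with runs
`(2, b, 2)` given the value `y` at the top of the middle run. -/
def db (b : ℕ) (x y : ℝ) : ℝ :=
  (1 - x ^ b - (1 - y) ^ b + (max (x - y) 0) ^ b) /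
    ((1 - 1 / (b + 1)) * (1 - (1 - y) ^ b) + (y / (b + 1)) * (1 - y) ^ b)

theorem succ_mul_pow_mul_one_sub_le_one_sub_pow {c : ℝ} (hc₀ : 0 ≤ c) (hc₁ : c ≤ 1)
    (n : ℕ) :
    (n + 1) * c ^ n * (1 - c) ≤ 1 - c ^ (n + 1) := by
  rw [← geom_sum_mul_neg]
  refine mul_le_mul_of_nonneg_right ?_ (by linarith)
  calc ((n : ℝ) + 1) * c ^ n = ∑ _i ∈ Finset.range (n + 1), c ^ n := by simp
    _ ≤ ∑ i ∈ Finset.range (n + 1), c ^ i :=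
      Finset.sum_le_sum fun i hi ↦
        pow_le_pow_of_le_one hc₀ hc₁ (Nat.lt_succ_iff.mp (Finset.mem_range.mp hi))

theorem abs_max_sub_pow_sub_pow_mul_le {x y : ℝ} (hx : x ∈ Icc (0:ℝ) 1)
    (hy : y ∈ Icc (0:ℝ) 1) (n : ℕ) :
    |max (x - y) 0 ^ (n + 1) - x ^ (n + 1) * (1 - y) ^ (n + 1)| ≤ y * (1 - y) ^ n := by
  obtain ⟨hx₀, hx₁⟩ := hx
  obtain ⟨hy₀, hy₁⟩ := hy
  have h1y : 0 ≤ 1 - y := by linarith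
  rcases le_or_gt x y with hxy | hyx
  · rw [max_eq_right (by linarith), zero_pow n.succ_ne_zero, zero_sub, abs_neg,
      abs_of_nonneg (by positivity)]
    calc x ^ (n + 1) * (1 - y) ^ (n + 1) ≤ y ^ (n + 1) * (1 - y) ^ (n + 1) := by gcongr
      _ = y * (1 - y) ^ n * (y ^ n * (1 - y)) := by ring
      _ ≤ y * (1 - y) ^ n * 1 := by
          gcongr
          nlinarith [pow_le_one₀ hy₀ hy₁ (n := n), pow_nonneg hy₀ n]
      _ = y * (1 - y) ^ n := mul_one _
  · rw [max_eq_left (by linarith), ← mul_pow]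
    have hmax : max |x - y| |x * (1 - y)| = x * (1 - y) := by
      rw [abs_of_nonneg (by linarith), abs_of_nonneg (by positivity)]
      exact max_eq_right (by nlinarith)
    have hdiff : |x - y - x * (1 - y)| = y * (1 - x) := by
      rw [show x - y - x * (1 - y) = -(y * (1 - x)) by ring, abs_neg,
        abs_of_nonneg (by nlinarith)]
    calc _ ≤ |x - y - x * (1 - y)| * ↑(n + 1) * max |x - y| |x * (1 - y)| ^ (n + 1 - 1) :=
          abs_pow_sub_pow_le ..
      _ = y * (1 - y) ^ n * ((n + 1) * x ^ n * (1 - x)) := by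
          rw [hmax, hdiff, Nat.add_sub_cancel, mul_pow]; push_cast; ring
      _ ≤ y * (1 - y) ^ n * 1 := by
          gcongr
          linarith [succ_mul_pow_mul_one_sub_le_one_sub_pow hx₀ hx₁ n, pow_nonneg hx₀ (n + 1)]
      _ = y * (1 - y) ^ n := mul_one _

theorem abs_max_sub_pow_sub_pow_mul_le_div {x y : ℝ} (hx : x ∈ Icc (0:ℝ) 1)
    (hy : y ∈ Icc (0:ℝ) 1) (n : ℕ) :
    |max (x - y) 0 ^ (n + 1) - x ^ (n + 1) * (1 - y) ^ (n + 1)| ≤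
      (1 - (1 - y) ^ (n + 1)) / (n + 1) := by
  rw [le_div_iff₀ (by positivity)]
  calc _ ≤ y * (1 - y) ^ n * (n + 1) := by gcongr; exact abs_max_sub_pow_sub_pow_mul_le hx hy n
    _ ≤ 1 - (1 - y) ^ (n + 1) := by
        have := succ_mul_pow_mul_one_sub_le_one_sub_pow (c := 1 - y) (by linarith [hy.2])
          (by linarith [hy.1]) n
        linarith

theorem abs_db_sub_one_sub_pow_le {b : ℕ} (hb : 0 < b) {x y : ℝ} (hx : x ∈ Icc (0:ℝ) 1)
    (hy : y ∈ Ioc (0:ℝ) 1) : |db b x y - (1 - x ^ b)| ≤ 4 / b := by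
  obtain ⟨n, rfl⟩ := Nat.exists_eq_add_one_of_ne_zero hb.ne'
  obtain ⟨hy₀, hy₁⟩ := hy
  set u := (1 - y) ^ (n + 1)
  set t := 1 - u
  have hu₀ : 0 ≤ u := pow_nonneg (by linarith) _
  have hyt : y ≤ t := by
    linarith [pow_le_of_le_one (by linarith : 0 ≤ 1 - y) (by linarith) n.add_one_ne_zero]
  have hyu : y * u ≤ t := by nlinarith
  have hpow := abs_max_sub_pow_sub_pow_mul_le_div hx ⟨hy₀.le, hy₁⟩ n
  have hcorr : |(1 - x ^ (n + 1)) * (t - y * u) / (n + 1 + 1)| ≤ t / (n + 1) := by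
    have hxb : |1 - x ^ (n + 1)| ≤ 1 :=
      abs_le.2 ⟨by linarith [pow_le_one₀ hx.1 hx.2 (n := n + 1)],
        by linarith [pow_nonneg hx.1 (n + 1)]⟩
    have hnum : |(1 - x ^ (n + 1)) * (t - y * u)| ≤ t := by
      rw [abs_mul, abs_of_nonneg (by linarith : 0 ≤ t - y * u)]
      nlinarith [abs_nonneg (1 - x ^ (n + 1))]
    rw [abs_div, abs_of_pos (by positivity : (0:ℝ) < n + 1 + 1)]
    exact div_le_div₀ (by linarith) hnum (by positivity) (by linarith)
  set m := max (x - y) 0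
  set N := 1 - x ^ (n + 1) - u + m ^ (n + 1)
  set D := (1 - 1 / ((n : ℝ) + 1 + 1)) * t + y / ((n : ℝ) + 1 + 1) * u
  have hD : t / 2 ≤ D := by
    have : 1 / ((n : ℝ) + 1 + 1) ≤ 1 / 2 := by gcongr; linarith [n.cast_nonneg (α := ℝ)]
    have : 0 ≤ y / ((n : ℝ) + 1 + 1) * u := by positivity
    nlinarith
  have hD₀ : 0 < D := by linarith
  have hdb : db (n + 1) x y = N / D := by simp only [db, N, D, t, u, m]; push_cast; rfl
  have hdecomp : N - (1 - x ^ (n + 1)) * D =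
      (m ^ (n + 1) - x ^ (n + 1) * u) + (1 - x ^ (n + 1)) * (t - y * u) / (n + 1 + 1) := by
    simp only [N, D, t]
    field_simp
    ring
  rw [hdb, div_sub' hD₀.ne', abs_div, abs_of_pos hD₀, div_le_iff₀ hD₀, mul_comm D, hdecomp]
  calc _ ≤ t / (n + 1) + t / (n + 1) := (abs_add_le _ _).trans (add_le_add hpow hcorr)
    _ = 4 / ((n + 1 : ℕ) : ℝ) * (t / 2) := by push_cast; ring
    _ ≤ 4 / ((n + 1 : ℕ) : ℝ) * D := by gcongr

theorem exists_forall_abs_db_sub_one_sub_pow_lt {ε : ℝ} (hε : 0 < ε) :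
    ∃ B : ℕ, ∀ b ≥ B, ∀ x ∈ Icc (0:ℝ) 1, ∀ y ∈ Ioc (0:ℝ) 1,
      |db b x y - (1 - x ^ b)| < ε := by
  obtain ⟨B, hB⟩ := exists_nat_gt (4 / ε)
  have hB₀ : (0:ℝ) < B := (div_pos four_pos hε).trans hB
  refine ⟨B, fun b hb x hx y hy ↦ ?_⟩
  have hb₀ : (0:ℝ) < b := hB₀.trans_le (by exact_mod_cast hb)
  refine (abs_db_sub_one_sub_pow_le (by exact_mod_cast hb₀) hx hy).trans_lt ?_
  rw [div_lt_comm₀ hb₀ hε]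
  exact hB.trans_le (by exact_mod_cast hb)

/-- `sup_{x ∈ [0,1], y ∈ (0,1]} |d_b(x,y) - (1 - x^b)| → 0` as `b → ∞`,
and consequently `sup_{x, y, y'} |d_b(x,y) - d_b(x,y')| → 0` as `b → ∞`. -/
theorem stmt14 :
    (∀ ε > (0:ℝ), ∃ B : ℕ, ∀ b : ℕ, 2 ≤ b → B ≤ b →
      ∀ x ∈ Icc (0:ℝ) 1, ∀ y ∈ Ioc (0:ℝ) 1, |db b x y - (1 - x ^ b)| < ε) ∧
    (∀ ε > (0:ℝ), ∃ B : ℕ, ∀ b : ℕ, 2 ≤ b → B ≤ b →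
      ∀ x ∈ Icc (0:ℝ) 1, ∀ y ∈ Ioc (0:ℝ) 1, ∀ y' ∈ Ioc (0:ℝ) 1,
        |db b x y - db b x y'| < ε) := by
  refine ⟨fun ε hε ↦ ?_, fun ε hε ↦ ?_⟩
  · obtain ⟨B, hB⟩ := exists_forall_abs_db_sub_one_sub_pow_lt hε
    exact ⟨B, fun b _ hb ↦ hB b hb⟩
  · obtain ⟨B, hB⟩ := exists_forall_abs_db_sub_one_sub_pow_lt (half_pos hε)
    refine ⟨B, fun b _ hb x hx y hy y' hy' ↦ ?_⟩
    calc |db b x y - db b x y'|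
        ≤ |db b x y - (1 - x ^ b)| + |(1 - x ^ b) - db b x y'| := abs_sub_le _ _ _
      _ < ε / 2 + ε / 2 := by
          rw [abs_sub_comm (1 - x ^ b)]
          exact add_lt_add (hB b hb x hx y hy) (hB b hb x hx y' hy')
      _ = ε := add_halves ε

end
end

section
/- Let λ be a composition of n ≥ 2 and let μ_λ be Lebesgue measure on [0,1]^n conditioned on E_λ. For x ∈ E_λ let σ = std(x) be the rank permutation of x. Then for every A > 0: μ_λ( max( |σ(1)/(n+1) − x_1| , |σ(n)/(n+1) − x_n| ) > A/√(n+2) ) ≤ 2/A². -/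
/-!
On the order simplex of a permutation `σ` (the points `x` of the cube with `std(x) = σ + 1`),
the coordinate `x i` is distributed like the `(σ i + 1)`-th order statistic of `n` uniform
variables, i.e. `Beta(σ i + 1, n - σ i)`, with mean `(σ i + 1)/(n + 1) = std(x)(i)/(n + 1)` and
variance at most `1/(4(n + 2))`. Chebyshev's inequality bounds the deviation on each simplex,
`E_λ` is up to a null set the disjoint union of the simplices it contains, and a union bound over
the first and last coordinates gives `2 · 1/(4A²) ≤ 2/A²`.

The marginal law needs no simplex volumes: the simplices whose permutations split the coordinates
at `i` in the same way are congruent under coordinate permutations fixing `i`, and their union is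
a product region whose fibre over `x i = t` has volume `t ^ k * (1 - t) ^ (n - 1 - k)`.
-/

open MeasureTheory Set

noncomputable section

/-- The region `E_λ ⊆ [0,1]^n` attached to the composition of `n`
with descent set `D ⊆ {1,…,n-1}`. -/
def Eset (n : ℕ) (D : Finset ℕ) : Set (Fin n → ℝ) :=
  {x | (∀ i, x i ∈ Set.Icc (0:ℝ) 1) ∧
    ∀ i j : Fin n, (j : ℕ) = (i : ℕ) + 1 →
      ((((i : ℕ) + 1) ∈ D → x j < x i) ∧ (((i : ℕ) + 1) ∉ D → x i < x j))}

/-- 1-based rank function: `stdRank n x i = #{j : x j ≤ x i}` (the standardization). -/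
def stdRank (n : ℕ) (x : Fin n → ℝ) (i : Fin n) : ℕ :=
  (Finset.univ.filter (fun j => x j ≤ x i)).card

open scoped ENNReal

section OrderSimplex

variable {n : ℕ}

/-- `x ∘ σ⁻¹` lists the coordinates of `x` in increasing order, so `σ i` is the 0-based rank
of `x i`. -/
def orderSimplex (σ : Equiv.Perm (Fin n)) : Set (Fin n → ℝ) :=
  {x | (∀ i, x i ∈ Icc (0 : ℝ) 1) ∧ StrictMono (x ∘ σ.symm)}

theorem measurableSet_orderSimplex (σ : Equiv.Perm (Fin n)) :
    MeasurableSet (orderSimplex σ) := by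
  simp only [orderSimplex, StrictMono, Function.comp_apply, ofPred_and, ofPred_forall]
  measurability

theorem ae_injective (n : ℕ) : ∀ᵐ x : Fin n → ℝ, Function.Injective x := by
  have hdiag : ∀ i j : Fin n, i ≠ j → volume {x : Fin n → ℝ | x i = x j} = 0 := by
    intro i j hij
    let L : (Fin n → ℝ) →ₗ[ℝ] ℝ :=
      LinearMap.proj (R := ℝ) (φ := fun _ : Fin n => ℝ) i - LinearMap.proj j
    have hL : {x : Fin n → ℝ | x i = x j} = (LinearMap.ker L : Set (Fin n → ℝ)) := by
      ext x; simp [L, sub_eq_zero]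
    rw [hL]
    refine Measure.addHaar_submodule _ _ fun htop => ?_
    have : Pi.single i 1 ∈ LinearMap.ker L := htop ▸ Submodule.mem_top
    simp [L, hij.symm] at this
  rw [ae_iff]
  refine measure_mono_null (fun x hx => ?_) (measure_iUnion_null fun i =>
    measure_iUnion_null fun j => measure_iUnion_null (hdiag i j))
  simp only [Function.Injective, not_forall, mem_ofPred_eq] at hx
  obtain ⟨i, j, hxij, hij⟩ := hx
  exact mem_iUnion₂.2 ⟨i, j, mem_iUnion.2 ⟨hij, hxij⟩⟩

variable {σ τ : Equiv.Perm (Fin n)} {x : Fin n → ℝ}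

theorem lt_iff_of_mem_orderSimplex (hx : x ∈ orderSimplex σ) (i j : Fin n) :
    x i < x j ↔ σ i < σ j := by
  simpa using hx.2.lt_iff_lt (a := σ i) (b := σ j)

theorem le_iff_of_mem_orderSimplex (hx : x ∈ orderSimplex σ) (i j : Fin n) :
    x i ≤ x j ↔ σ i ≤ σ j := by
  simpa using hx.2.le_iff_le (a := σ i) (b := σ j)

theorem eq_of_mem_orderSimplex (hσ : x ∈ orderSimplex σ) (hτ : x ∈ orderSimplex τ) : σ = τ := by
  have hinj : Function.Injective x := by
    simpa using hσ.2.injective.comp σ.injective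
  have h : x ∘ σ.symm = x ∘ τ.symm :=
    (hσ.2.range_inj hτ.2).1 (by simp only [EquivLike.range_comp])
  exact inv_injective (Equiv.ext fun i => hinj (congrFun h i))

theorem pairwise_disjoint_orderSimplex :
    Pairwise (Function.onFun Disjoint (orderSimplex (n := n))) :=
  fun _ _ hne => disjoint_left.2 fun _ hσ hτ => hne (eq_of_mem_orderSimplex hσ hτ)

theorem exists_mem_orderSimplex (hcube : ∀ i, x i ∈ Icc (0 : ℝ) 1)
    (hinj : Function.Injective x) : ∃ σ : Equiv.Perm (Fin n), x ∈ orderSimplex σ :=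
  ⟨(Tuple.sort x).symm, hcube, by
    simpa using (Tuple.monotone_sort x).strictMono_of_injective
      (hinj.comp (Tuple.sort x).injective)⟩

theorem card_filter_apply_lt (σ : Equiv.Perm (Fin n)) (i : Fin n) :
    (Finset.univ.filter fun j => σ j < σ i).card = σ i :=
  (Finset.card_equiv σ (by simp)).trans (Fin.card_Iio _)

theorem stdRank_of_mem_orderSimplex (hx : x ∈ orderSimplex σ) (i : Fin n) :
    stdRank n x i = σ i + 1 := by
  simp only [stdRank, le_iff_of_mem_orderSimplex hx]
  exact (Finset.card_equiv σ (by simp)).trans (Fin.card_Iic _)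

theorem volume_orderSimplex_inter_eq_of_apply_eq {i₀ : Fin n} (h : τ i₀ = σ i₀) (C : Set ℝ) :
    volume (orderSimplex τ ∩ {x | x i₀ ∈ C}) = volume (orderSimplex σ ∩ {x | x i₀ ∈ C}) := by
  let π := τ.trans σ.symm
  have he (x : Fin n → ℝ) : MeasurableEquiv.piCongrLeft (fun _ => ℝ) π.symm x = x ∘ π :=
    funext fun i => by
      simpa using MeasurableEquiv.piCongrLeft_apply_apply (β := fun _ => ℝ) π.symm x (π i)
  rw [← (volume_measurePreserving_piCongrLeft (fun _ : Fin n => ℝ) π.symm).measure_preimage_equiv]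
  congr 1
  ext x
  have hπ : π ∘ τ.symm = σ.symm := by ext; simp [π]
  have hπi₀ : π i₀ = i₀ := by simp [π, h]
  simp only [orderSimplex, mem_preimage, mem_inter_iff, mem_ofPred_eq, he, Function.comp_assoc, hπ,
    Function.comp_apply, hπi₀, π.forall_congr_right (q := fun i => x i ∈ Icc 0 1)]

/-- Up to a null set, the union of the order simplices of the `τ` that split the coordinates at
`i₀` as `σ` does; unlike a single simplex, it has product fibres over `x i₀`. -/
def pivotRegion (σ : Equiv.Perm (Fin n)) (i₀ : Fin n) : Set (Fin n → ℝ) :=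
  {x | (∀ i, x i ∈ Icc (0 : ℝ) 1) ∧ ∀ j, (σ j < σ i₀ → x j < x i₀) ∧ (σ i₀ < σ j → x i₀ < x j)}

theorem lt_iff_of_mem_pivotRegion {i₀ : Fin n} (hx : x ∈ pivotRegion σ i₀) (j : Fin n) :
    x j < x i₀ ↔ σ j < σ i₀ := by
  refine ⟨fun hj => ?_, (hx.2 j).1⟩
  rcases lt_trichotomy (σ j) (σ i₀) with hlt | heq | hgt
  · exact hlt
  · exact absurd hj (by rw [σ.injective heq]; exact lt_irrefl _)
  · exact absurd ((hx.2 j).2 hgt) (lt_asymm hj)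

theorem volume_pivotRegion_inter_eq_card_mul (σ : Equiv.Perm (Fin n)) (i₀ : Fin n) {C : Set ℝ}
    (hC : MeasurableSet C) :
    volume (pivotRegion σ i₀ ∩ {x | x i₀ ∈ C}) =
      (Finset.univ.filter fun τ : Equiv.Perm (Fin n) => ∀ j, τ j < τ i₀ ↔ σ j < σ i₀).card *
        volume (orderSimplex σ ∩ {x | x i₀ ∈ C}) := by
  set K := Finset.univ.filter fun τ : Equiv.Perm (Fin n) => ∀ j, τ j < τ i₀ ↔ σ j < σ i₀
  have hK : ∀ τ ∈ K, τ i₀ = σ i₀ := fun τ hτ => Fin.ext <| by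
    rw [← card_filter_apply_lt τ, ← card_filter_apply_lt σ]
    exact congrArg _ (Finset.filter_congr fun j _ => (Finset.mem_filter.1 hτ).2 j)
  have hunion : (pivotRegion σ i₀ ∩ {x | x i₀ ∈ C} : Set (Fin n → ℝ)) =ᵐ[volume]
      ⋃ τ ∈ K, orderSimplex τ ∩ {x | x i₀ ∈ C} := by
    refine Filter.EventuallyLE.antisymm ((ae_injective n).mono fun x hinj hx => ?_)
      (LE.le.eventuallyLE ?_)
    · obtain ⟨τ, hτ⟩ := exists_mem_orderSimplex hx.1.1 hinj
      refine mem_iUnion₂.2 ⟨τ, Finset.mem_filter.2 ⟨Finset.mem_univ _, fun j => ?_⟩, hτ, hx.2⟩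
      rw [← lt_iff_of_mem_orderSimplex hτ, lt_iff_of_mem_pivotRegion hx.1]
    · refine iUnion₂_subset fun τ hτ x ⟨hx, hxC⟩ =>
        ⟨⟨hx.1, fun j => ⟨fun hσj => ?_, fun hσj => ?_⟩⟩, hxC⟩
      · rw [lt_iff_of_mem_orderSimplex hx]
        exact ((Finset.mem_filter.1 hτ).2 j).2 hσj
      · rw [lt_iff_of_mem_orderSimplex hx]
        have hne : τ j ≠ τ i₀ := τ.injective.ne (by rintro rfl; exact lt_irrefl _ hσj)
        refine lt_of_le_of_ne (not_lt.1 fun h => lt_asymm hσj ?_) hne.symm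
        exact ((Finset.mem_filter.1 hτ).2 j).1 h
  rw [measure_congr hunion, measure_biUnion_finset
      (fun τ _ τ' _ hne => (pairwise_disjoint_orderSimplex hne).mono inter_subset_left
        inter_subset_left)
      (fun τ _ => (measurableSet_orderSimplex τ).inter
        (show MeasurableSet {x : Fin n → ℝ | x i₀ ∈ C} from measurable_pi_apply i₀ hC)),
    Finset.sum_congr rfl fun τ hτ => volume_orderSimplex_inter_eq_of_apply_eq (hK τ hτ) C,
    Finset.sum_const, nsmul_eq_mul]

end OrderSimplex

section Fubini

variable {N : ℕ}

theorem card_filter_succAbove_lt (σ : Equiv.Perm (Fin (N + 1))) (i₀ : Fin (N + 1)) :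
    (Finset.univ.filter fun j : Fin N => σ (i₀.succAbove j) < σ i₀).card = σ i₀ := by
  rw [← card_filter_apply_lt σ i₀, Finset.card_filter, Finset.card_filter,
    Fin.sum_univ_succAbove _ i₀]
  simp

theorem insertNth_mem_pivotRegion_iff (σ : Equiv.Perm (Fin (N + 1))) (i₀ : Fin (N + 1)) (t : ℝ)
    (y : Fin N → ℝ) :
    Fin.insertNth i₀ t y ∈ pivotRegion σ i₀ ↔ t ∈ Icc 0 1 ∧
      y ∈ univ.pi fun j => if σ (i₀.succAbove j) < σ i₀ then Ico 0 t else Ioc t 1 := by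
  simp only [pivotRegion, mem_ofPred_eq, Fin.forall_iff_succAbove i₀, Fin.insertNth_apply_same,
    Fin.insertNth_apply_succAbove, lt_irrefl, mem_univ_pi]
  have hne (j : Fin N) : σ i₀ ≠ σ (i₀.succAbove j) := σ.injective.ne (Fin.succAbove_ne i₀ j).symm
  constructor
  · rintro ⟨⟨ht, hy⟩, -, hord⟩
    refine ⟨ht, fun j => ?_⟩
    split_ifs with h
    · exact ⟨(hy j).1, (hord j).1 h⟩
    · exact ⟨(hord j).2 (lt_of_le_of_ne (not_lt.1 h) (hne j)), (hy j).2⟩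
  · rintro ⟨ht, hy⟩
    refine ⟨⟨ht, fun j => ?_⟩, ⟨id, id⟩, fun j => ?_⟩ <;> have hyj := hy j <;>
      split_ifs at hyj with h
    · exact ⟨hyj.1, hyj.2.le.trans ht.2⟩
    · exact ⟨ht.1.trans hyj.1.le, hyj.2⟩
    · exact ⟨fun _ => hyj.2, fun h' => absurd h (lt_asymm h')⟩
    · exact ⟨fun h' => absurd h' h, fun _ => hyj.1⟩

theorem volume_univ_pi_ite_Ico_Ioc (σ : Equiv.Perm (Fin (N + 1))) (i₀ : Fin (N + 1)) {t : ℝ}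
    (ht : t ∈ Icc 0 1) :
    volume (univ.pi fun j : Fin N => if σ (i₀.succAbove j) < σ i₀ then Ico 0 t else Ioc t 1) =
      ENNReal.ofReal (t ^ (σ i₀ : ℕ) * (1 - t) ^ (N - σ i₀)) := by
  have hcompl := Finset.card_filter_add_card_filter_not (s := Finset.univ)
    (fun j : Fin N => σ (i₀.succAbove j) < σ i₀)
  rw [card_filter_succAbove_lt, Finset.card_univ, Fintype.card_fin] at hcompl
  simp_rw [volume_pi_pi, apply_ite volume, Real.volume_Ico, Real.volume_Ioc, sub_zero]
  rw [Finset.prod_ite, Finset.prod_const, Finset.prod_const, card_filter_succAbove_lt,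
    show (Finset.univ.filter _).card = N - σ i₀ by omega, ENNReal.ofReal_mul (by simp [ht.1]),
    ENNReal.ofReal_pow ht.1, ENNReal.ofReal_pow (sub_nonneg.2 ht.2)]

theorem measurableSet_pivotRegion (σ : Equiv.Perm (Fin (N + 1))) (i₀ : Fin (N + 1)) :
    MeasurableSet (pivotRegion σ i₀) := by
  simp only [pivotRegion, ofPred_and, ofPred_forall]
  measurability

theorem volume_pivotRegion_inter_eq_lintegral (σ : Equiv.Perm (Fin (N + 1))) (i₀ : Fin (N + 1))
    {C : Set ℝ} (hC : MeasurableSet C) :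
    volume (pivotRegion σ i₀ ∩ {x | x i₀ ∈ C}) =
      ∫⁻ t in C ∩ Icc 0 1, ENNReal.ofReal (t ^ (σ i₀ : ℕ) * (1 - t) ^ (N - σ i₀)) := by
  let e := MeasurableEquiv.piFinSuccAbove (fun _ : Fin (N + 1) => ℝ) i₀
  have hS : MeasurableSet (pivotRegion σ i₀ ∩ {x | x i₀ ∈ C}) :=
    (measurableSet_pivotRegion σ i₀).inter (measurable_pi_apply i₀ hC)
  rw [← ((volume_preserving_piFinSuccAbove (fun _ : Fin (N + 1) => ℝ) i₀).symm
    e).measure_preimage_equiv, Measure.volume_eq_prod, Measure.prod_apply (e.symm.measurable hS),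
    ← lintegral_indicator (hC.inter measurableSet_Icc)]
  refine lintegral_congr fun t => ?_
  simp only [e, preimage, mem_inter_iff, mem_ofPred_eq, MeasurableEquiv.piFinSuccAbove_symm_apply,
    Fin.insertNthEquiv, Equiv.coe_fn_mk, insertNth_mem_pivotRegion_iff, Fin.insertNth_apply_same]
  by_cases ht : t ∈ C ∩ Icc 0 1
  · rw [indicator_of_mem ht, ← volume_univ_pi_ite_Ico_Ioc σ i₀ ht.2]
    congr 1
    ext y
    simp [ht.1, ht.2]
  · rw [indicator_of_notMem ht]
    exact measure_mono_null (fun y hy => (ht ⟨hy.2, hy.1.1⟩).elim) measure_empty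

end Fubini

theorem integral_pow_succ_mul_one_sub_pow (a b : ℕ) :
    ((a : ℝ) + b + 2) * ∫ x in (0 : ℝ)..1, x ^ (a + 1) * (1 - x) ^ b =
      ((a : ℝ) + 1) * ∫ x in (0 : ℝ)..1, x ^ a * (1 - x) ^ b := by
  have hderiv (x : ℝ) : HasDerivAt (fun y : ℝ => y ^ (a + 1) * (1 - y) ^ (b + 1))
      (((a : ℝ) + 1) * (x ^ a * (1 - x) ^ b) - ((a : ℝ) + b + 2) * (x ^ (a + 1) * (1 - x) ^ b))
      x := by
    have h := ((hasDerivAt_pow (a + 1) x).mul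
      ((hasDerivAt_pow (b + 1) (1 - x)).comp x ((hasDerivAt_id x).const_sub 1)))
    refine h.congr_deriv ?_
    simp only [Nat.add_sub_cancel, Function.comp_apply]
    push_cast
    ring
  have hint (c : ℕ) : IntervalIntegrable (fun x : ℝ => x ^ c * (1 - x) ^ b) volume 0 1 :=
    (by fun_prop : Continuous fun x : ℝ => x ^ c * (1 - x) ^ b).intervalIntegrable 0 1
  have hFTC := intervalIntegral.integral_eq_sub_of_hasDerivAt (fun x _ => hderiv x)
    (((hint a).const_mul _).sub ((hint (a + 1)).const_mul _))
  rw [intervalIntegral.integral_sub ((hint a).const_mul _) ((hint (a + 1)).const_mul _),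
    intervalIntegral.integral_const_mul, intervalIntegral.integral_const_mul] at hFTC
  simp only [one_pow, sub_self, zero_pow (Nat.succ_ne_zero _), mul_zero, sub_zero, mul_one]
    at hFTC
  linarith

theorem integral_sq_sub_mean_mul_pow_mul_one_sub_pow_le (k m : ℕ) :
    ∫ x in (0 : ℝ)..1, (x - ((k : ℝ) + 1) / (k + m + 2)) ^ 2 * (x ^ k * (1 - x) ^ m) ≤
      1 / (4 * ((k : ℝ) + m + 3)) * ∫ x in (0 : ℝ)..1, x ^ k * (1 - x) ^ m := by
  set c : ℝ := ((k : ℝ) + 1) / (k + m + 2)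
  set J : ℕ → ℝ := fun a => ∫ x in (0 : ℝ)..1, x ^ a * (1 - x) ^ m
  have hint (a : ℕ) : IntervalIntegrable (fun x : ℝ => x ^ a * (1 - x) ^ m) volume 0 1 :=
    (by fun_prop : Continuous fun x : ℝ => x ^ a * (1 - x) ^ m).intervalIntegrable 0 1
  have hJ0 : 0 ≤ J k := intervalIntegral.integral_nonneg zero_le_one fun x hx =>
    mul_nonneg (pow_nonneg hx.1 _) (pow_nonneg (sub_nonneg.2 hx.2) _)
  have hJ1 : J (k + 1) = ((k : ℝ) + 1) / (k + m + 2) * J k := by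
    rw [div_mul_eq_mul_div, eq_div_iff (by positivity)]
    linarith [integral_pow_succ_mul_one_sub_pow k m]
  have hJ2 : J (k + 2) = ((k : ℝ) + 2) / (k + m + 3) * J (k + 1) := by
    rw [div_mul_eq_mul_div, eq_div_iff (by positivity)]
    have h := integral_pow_succ_mul_one_sub_pow (k + 1) m
    push_cast at h
    linarith
  have hexpand : ∫ x in (0 : ℝ)..1, (x - c) ^ 2 * (x ^ k * (1 - x) ^ m) =
      J (k + 2) - 2 * c * J (k + 1) + c ^ 2 * J k := by
    rw [← intervalIntegral.integral_const_mul, ← intervalIntegral.integral_const_mul,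
      ← intervalIntegral.integral_sub (hint _) ((hint _).const_mul _),
      ← intervalIntegral.integral_add ((hint _).sub ((hint _).const_mul _))
        ((hint _).const_mul _)]
    exact intervalIntegral.integral_congr fun x _ => by ring
  -- the variance of the Beta(k+1, m+1) law is (k+1)(m+1)/((k+m+2)²(k+m+3)) ≤ 1/(4(k+m+3))
  have hvar : J (k + 2) - 2 * c * J (k + 1) + c ^ 2 * J k =
      ((k : ℝ) + 1) * (m + 1) / ((k + m + 2) ^ 2 * (k + m + 3)) * J k := by
    rw [hJ2, hJ1]
    simp only [c]
    field_simp
    ring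
  rw [hexpand, hvar]
  refine mul_le_mul_of_nonneg_right ?_ hJ0
  rw [div_le_div_iff₀ (by positivity) (by positivity)]
  nlinarith [sq_nonneg ((k : ℝ) - m)]

theorem lintegral_Icc_ofReal_eq {g : ℝ → ℝ} (hg : Continuous g)
    (hg0 : ∀ t ∈ Icc (0 : ℝ) 1, 0 ≤ g t) :
    ∫⁻ t in Icc 0 1, ENNReal.ofReal (g t) = ENNReal.ofReal (∫ t in (0 : ℝ)..1, g t) := by
  rw [intervalIntegral.integral_of_le zero_le_one, ← integral_Icc_eq_integral_Ioc,
    ofReal_integral_eq_lintegral_ofReal hg.integrableOn_Icc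
      ((ae_restrict_mem measurableSet_Icc).mono hg0)]

theorem lintegral_far_from_mean_le (k m : ℕ) {ε : ℝ} (hε : 0 < ε) :
    ∫⁻ t in {t | ε < |((k : ℝ) + 1) / (k + m + 2) - t|} ∩ Icc 0 1,
        ENNReal.ofReal (t ^ k * (1 - t) ^ m) ≤
      ENNReal.ofReal (1 / (4 * ((k : ℝ) + m + 3) * ε ^ 2)) *
        ∫⁻ t in Icc 0 1, ENNReal.ofReal (t ^ k * (1 - t) ^ m) := by
  set c : ℝ := ((k : ℝ) + 1) / (k + m + 2)
  have hw0 (t : ℝ) (ht : t ∈ Icc (0 : ℝ) 1) : 0 ≤ t ^ k * (1 - t) ^ m :=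
    mul_nonneg (pow_nonneg ht.1 _) (pow_nonneg (sub_nonneg.2 ht.2) _)
  have hchebyshev (t : ℝ) (hfar : ε < |c - t|) (ht : t ∈ Icc (0 : ℝ) 1) :
      t ^ k * (1 - t) ^ m ≤ ε⁻¹ ^ 2 * ((t - c) ^ 2 * (t ^ k * (1 - t) ^ m)) := by
    have hsq : ε ^ 2 ≤ (t - c) ^ 2 := by
      rw [← sq_abs (t - c), abs_sub_comm]
      exact pow_le_pow_left₀ hε.le hfar.le 2
    rw [← mul_assoc]
    refine le_mul_of_one_le_left (hw0 t ht) ?_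
    rw [inv_pow, ← div_eq_inv_mul, one_le_div (by positivity)]
    exact hsq
  calc ∫⁻ t in {t | ε < |c - t|} ∩ Icc 0 1, ENNReal.ofReal (t ^ k * (1 - t) ^ m)
      ≤ ∫⁻ t in {t | ε < |c - t|} ∩ Icc 0 1,
          ENNReal.ofReal (ε⁻¹ ^ 2 * ((t - c) ^ 2 * (t ^ k * (1 - t) ^ m))) :=
        setLIntegral_mono (by fun_prop) fun t ⟨hfar, ht⟩ =>
          ENNReal.ofReal_le_ofReal (hchebyshev t hfar ht)
    _ ≤ ∫⁻ t in Icc 0 1, ENNReal.ofReal (ε⁻¹ ^ 2 * ((t - c) ^ 2 * (t ^ k * (1 - t) ^ m))) :=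
        lintegral_mono_set inter_subset_right
    _ = ENNReal.ofReal (ε⁻¹ ^ 2 * ∫ t in (0 : ℝ)..1, (t - c) ^ 2 * (t ^ k * (1 - t) ^ m)) := by
        rw [lintegral_Icc_ofReal_eq (by fun_prop) fun t ht =>
          mul_nonneg (by positivity) (mul_nonneg (sq_nonneg _) (hw0 t ht)),
          intervalIntegral.integral_const_mul]
    _ ≤ ENNReal.ofReal (ε⁻¹ ^ 2 *
          (1 / (4 * ((k : ℝ) + m + 3)) * ∫ t in (0 : ℝ)..1, t ^ k * (1 - t) ^ m)) :=
        ENNReal.ofReal_le_ofReal (mul_le_mul_of_nonneg_left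
          (integral_sq_sub_mean_mul_pow_mul_one_sub_pow_le k m) (by positivity))
    _ = ENNReal.ofReal (1 / (4 * ((k : ℝ) + m + 3) * ε ^ 2)) *
          ∫⁻ t in Icc 0 1, ENNReal.ofReal (t ^ k * (1 - t) ^ m) := by
        rw [lintegral_Icc_ofReal_eq (by fun_prop) hw0, ← ENNReal.ofReal_mul (by positivity)]
        congr 1
        field_simp

theorem volume_orderSimplex_inter_far_le {n : ℕ} (σ : Equiv.Perm (Fin n)) (i₀ : Fin n) {ε : ℝ}
    (hε : 0 < ε) :
    volume (orderSimplex σ ∩ {x | ε < |((σ i₀ : ℕ) + 1 : ℝ) / (n + 1) - x i₀|}) ≤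
      ENNReal.ofReal (1 / (4 * ((n : ℝ) + 2) * ε ^ 2)) * volume (orderSimplex σ) := by
  obtain ⟨N, rfl⟩ : ∃ N, n = N + 1 := ⟨n - 1, by have := i₀.pos; omega⟩
  set k := (σ i₀ : ℕ)
  obtain ⟨m, hm⟩ : ∃ m, N = k + m := Nat.exists_eq_add_of_le (Nat.lt_succ_iff.1 (σ i₀).isLt)
  have hNk : N - k = m := by omega
  have hn1 : ((N + 1 : ℕ) : ℝ) + 1 = k + m + 2 := by rw [hm]; push_cast; ring
  have hn2 : ((N + 1 : ℕ) : ℝ) + 2 = k + m + 3 := by rw [hm]; push_cast; ring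
  set far : Set ℝ := {t | ε < |((k : ℝ) + 1) / (k + m + 2) - t|}
  have hfar : MeasurableSet far := measurableSet_lt measurable_const (by fun_prop)
  set K :=
    (Finset.univ.filter fun τ : Equiv.Perm (Fin (N + 1)) => ∀ j, τ j < τ i₀ ↔ σ j < σ i₀).card
  have hK : (K : ℝ≥0∞) ≠ 0 := Nat.cast_ne_zero.2 (Finset.card_ne_zero.2 ⟨σ, by simp⟩)
  rw [hn1, hn2]
  change volume (orderSimplex σ ∩ {x | x i₀ ∈ far}) ≤ _
  refine (ENNReal.mul_le_mul_iff_right hK (ENNReal.natCast_ne_top K)).1 ?_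
  calc (K : ℝ≥0∞) * volume (orderSimplex σ ∩ {x | x i₀ ∈ far})
      = volume (pivotRegion σ i₀ ∩ {x | x i₀ ∈ far}) :=
        (volume_pivotRegion_inter_eq_card_mul σ i₀ hfar).symm
    _ = ∫⁻ t in far ∩ Icc 0 1, ENNReal.ofReal (t ^ k * (1 - t) ^ m) := by
        rw [volume_pivotRegion_inter_eq_lintegral σ i₀ hfar, hNk]
    _ ≤ ENNReal.ofReal (1 / (4 * ((k : ℝ) + m + 3) * ε ^ 2)) *
          ∫⁻ t in Icc 0 1, ENNReal.ofReal (t ^ k * (1 - t) ^ m) :=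
        lintegral_far_from_mean_le k m hε
    _ = _ := by
        have hcube := volume_pivotRegion_inter_eq_lintegral σ i₀ MeasurableSet.univ
        rw [univ_inter, hNk] at hcube
        rw [← hcube, volume_pivotRegion_inter_eq_card_mul σ i₀ MeasurableSet.univ]
        simp only [mem_univ, ofPred_true, inter_univ]
        ring

theorem measure_inter_le_of_forall_orderSimplex {n : ℕ} {E B : Set (Fin n → ℝ)} {c : ℝ≥0∞}
    (hE : ∀ x ∈ E, Function.Injective x → ∃ σ, x ∈ orderSimplex σ ∧ orderSimplex σ ⊆ E)
    (hB : ∀ σ, volume (orderSimplex σ ∩ B) ≤ c * volume (orderSimplex σ)) :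
    volume (E ∩ B) ≤ c * volume E := by
  classical
  set T := Finset.univ.filter fun σ : Equiv.Perm (Fin n) => orderSimplex σ ⊆ E
  have hcover : (E ∩ B : Set (Fin n → ℝ)) ≤ᵐ[volume] ⋃ σ ∈ T, orderSimplex σ ∩ B :=
    (ae_injective n).mono fun x hinj ⟨hxE, hxB⟩ => by
      obtain ⟨σ, hx, hσ⟩ := hE x hxE hinj
      exact mem_iUnion₂.2 ⟨σ, by simpa [T] using hσ, hx, hxB⟩
  calc volume (E ∩ B) ≤ volume (⋃ σ ∈ T, orderSimplex σ ∩ B) := measure_mono_ae hcover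
    _ ≤ ∑ σ ∈ T, volume (orderSimplex σ ∩ B) := measure_biUnion_finset_le T _
    _ ≤ ∑ σ ∈ T, c * volume (orderSimplex σ) := Finset.sum_le_sum fun σ _ => hB σ
    _ = c * volume (⋃ σ ∈ T, orderSimplex σ) := by
        rw [← Finset.mul_sum, measure_biUnion_finset
          (fun _ _ _ _ h => pairwise_disjoint_orderSimplex h)
          fun σ _ => measurableSet_orderSimplex σ]
    _ ≤ c * volume E := by
        gcongr
        exact iUnion₂_subset fun σ hσ => (Finset.mem_filter.1 hσ).2

theorem measurableSet_Eset (n : ℕ) (D : Finset ℕ) : MeasurableSet (Eset n D) := by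
  simp only [Eset, ofPred_and, ofPred_forall]
  measurability

theorem orderSimplex_subset_Eset {n : ℕ} {D : Finset ℕ} {σ : Equiv.Perm (Fin n)}
    {x : Fin n → ℝ} (hx : x ∈ orderSimplex σ) (hxE : x ∈ Eset n D) :
    orderSimplex σ ⊆ Eset n D := fun y hy => ⟨hy.1, fun i j hij => by
  simpa only [lt_iff_of_mem_orderSimplex hy, lt_iff_of_mem_orderSimplex hx] using hxE.2 i j hij⟩

/-- Under Lebesgue measure conditioned on `E_λ`, the rescaled ranks
`σ(1)/(n+1)`, `σ(n)/(n+1)` of the first and last coordinates are within `A/√(n+2)` of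
`x₁`, `x_n` except with probability at most `2/A²`. -/
theorem stmt19 (n : ℕ) (hn : 2 ≤ n) (D : Finset ℕ)
    (A : ℝ) (hA : 0 < A) :
    ProbabilityTheory.cond volume (Eset n D)
      {x : Fin n → ℝ |
        A / Real.sqrt (n + 2) <
          max |(stdRank n x ⟨0, by omega⟩ : ℝ) / (n + 1) - x ⟨0, by omega⟩|
            |(stdRank n x ⟨n - 1, by omega⟩ : ℝ) / (n + 1) - x ⟨n - 1, by omega⟩|} ≤
      ENNReal.ofReal (2 / A ^ 2) := by
  set ε := A / Real.sqrt (n + 2)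
  set c := ENNReal.ofReal (1 / (4 * ((n : ℝ) + 2) * ε ^ 2))
  have hfar (i : Fin n) : volume (Eset n D ∩ {x | ε < |(stdRank n x i : ℝ) / (n + 1) - x i|}) ≤
      c * volume (Eset n D) := by
    refine measure_inter_le_of_forall_orderSimplex (fun x hx hinj => ?_) fun σ => ?_
    · obtain ⟨σ, hσ⟩ := exists_mem_orderSimplex hx.1 hinj
      exact ⟨σ, hσ, orderSimplex_subset_Eset hσ hx⟩
    · convert volume_orderSimplex_inter_far_le σ i (by positivity : 0 < ε) using 2
      ext x
      refine and_congr_right fun hx => ?_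
      simp only [mem_ofPred_eq, stdRank_of_mem_orderSimplex hx, Nat.cast_add, Nat.cast_one]
  have hc : c + c ≤ ENNReal.ofReal (2 / A ^ 2) := by
    have hε : ((n : ℝ) + 2) * ε ^ 2 = A ^ 2 := by
      rw [div_pow, Real.sq_sqrt (by positivity)]
      field_simp
    rw [← ENNReal.ofReal_add (by positivity) (by positivity), mul_assoc, hε]
    refine ENNReal.ofReal_le_ofReal ?_
    field_simp
    nlinarith
  rw [ProbabilityTheory.cond_apply (measurableSet_Eset n D)]
  simp only [lt_max_iff, ofPred_or, inter_union_distrib_left]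
  calc (volume (Eset n D))⁻¹ * volume (_ ∪ _)
      ≤ (volume (Eset n D))⁻¹ * (c * volume (Eset n D) + c * volume (Eset n D)) := by
        gcongr
        exact (measure_union_le _ _).trans (add_le_add (hfar _) (hfar _))
    _ = (c + c) * ((volume (Eset n D))⁻¹ * volume (Eset n D)) := by ring
    _ ≤ ENNReal.ofReal (2 / A ^ 2) := (mul_le_of_le_one_right' (ENNReal.inv_mul_le_one _)).trans hc

end
end
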